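/- arXiv:1311.3895 — 3 statements merged into one kernel-verified Lean document; each statement's English description precedes it below -/
import Mathlib

section
/- Let d ≥ 1 and μ ∈ M_c^+(ℝ^d). If limsup_{r→0⁺} log(inf{μ(B(x,r)) : x ∈ supp(μ)})/log r < ∞ then dom(τ_μ) = ℝ, and otherwise dom(τ_μ) = [0,∞). Moreover τ_μ* is non-negative on its domain: τ_μ*(α) ≥ 0 for every α ∈ ℝ∪{∞} with τ_μ*(α) > −∞. -/
open MeasureTheory Metric Set Filter Topology
open scoped ENNReal NNReal

noncomputable section

/-- `ℝ^d` with the Euclidean metric. -/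
abbrev Euc (d : ℕ) : Type := EuclideanSpace ℝ (Fin d)

/-- The topological support of a Borel measure on `ℝ^d`. -/
def msupp {d : ℕ} (μ : Measure (Euc d)) : Set (Euc d) :=
  {x | ∀ r : ℝ, 0 < r → 0 < μ (closedBall x r)}

/-- `μ ∈ 𝓜_c^+(ℝ^d)`: a nonzero finite compactly supported Borel measure. -/
def McPlus {d : ℕ} (μ : Measure (Euc d)) : Prop :=
  IsFiniteMeasure μ ∧ μ ≠ 0 ∧ ∃ K : Set (Euc d), IsCompact K ∧ μ Kᶜ = 0

/-- Logarithm `ℝ≥0∞ → EReal`, with `log 0 = ⊥` and `log ⊤ = ⊤`. -/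
def elog (x : ℝ≥0∞) : EReal :=
  if x = 0 then ⊥ else if x = ⊤ then ⊤ else ((Real.log x.toReal : ℝ) : EReal)

/-- Lower local dimension `liminf_{r→0⁺} log μ(B(x,r)) / log r`, valued in `EReal`. -/
def dLow {d : ℕ} (μ : Measure (Euc d)) (x : Euc d) : EReal :=
  Filter.liminf
    (fun r : ℝ => elog (μ (closedBall x r)) * (((Real.log r)⁻¹ : ℝ) : EReal)) (𝓝[>] (0:ℝ))

/-- Upper local dimension `limsup_{r→0⁺} log μ(B(x,r)) / log r`, valued in `EReal`. -/
def dUp {d : ℕ} (μ : Measure (Euc d)) (x : Euc d) : EReal :=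
  Filter.limsup
    (fun r : ℝ => elog (μ (closedBall x r)) * (((Real.log r)⁻¹ : ℝ) : EReal)) (𝓝[>] (0:ℝ))

/-- The level set `E(μ,α,β)`. -/
def Eab {d : ℕ} (μ : Measure (Euc d)) (α β : EReal) : Set (Euc d) :=
  {x ∈ msupp μ | dLow μ x = α ∧ dUp μ x = β}

/-- The level set `E̲(μ,α)`. -/
def Elow {d : ℕ} (μ : Measure (Euc d)) (α : EReal) : Set (Euc d) :=
  {x ∈ msupp μ | dLow μ x = α}

/-- The level set `Ē(μ,α)`. -/
def Eup {d : ℕ} (μ : Measure (Euc d)) (α : EReal) : Set (Euc d) :=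
  {x ∈ msupp μ | dUp μ x = α}

/-- The level set `E(μ,α) = E(μ,α,α)`. -/
def Epoint {d : ℕ} (μ : Measure (Euc d)) (α : EReal) : Set (Euc d) := Eab μ α α

-- Hausdorff dimension with the convention `dim_H ∅ = −∞`, valued in `EReal`.
open Classical in
def dimHE {X : Type*} [EMetricSpace X] (s : Set X) : EReal :=
  if s = ∅ then ⊥ else ((dimH s : ℝ≥0∞) : EReal)

/-- A centered packing of `supp μ` by pairwise disjoint closed balls of radius `r`. -/
def IsPacking {d : ℕ} (μ : Measure (Euc d)) (r : ℝ) (P : Set (Euc d)) : Prop :=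
  P ⊆ msupp μ ∧ P.PairwiseDisjoint fun x => closedBall x r

/-- `sup { Σ_i μ(B(x_i,r))^q }` over all centered packings of radius `r`. -/
def packSum {d : ℕ} (μ : Measure (Euc d)) (q r : ℝ) : ℝ≥0∞ :=
  ⨆ (P : Set (Euc d)) (_ : IsPacking μ r P), ∑' x : P, μ (closedBall (x : Euc d) r) ^ q

/-- The lower `L^q`-spectrum `τ_μ`. -/
def tauLow {d : ℕ} (μ : Measure (Euc d)) (q : ℝ) : EReal :=
  Filter.liminf (fun r : ℝ => elog (packSum μ q r) * (((Real.log r)⁻¹ : ℝ) : EReal)) (𝓝[>] (0:ℝ))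

/-- The upper `L^q`-spectrum `τ̄_μ`. -/
def tauUp {d : ℕ} (μ : Measure (Euc d)) (q : ℝ) : EReal :=
  Filter.limsup (fun r : ℝ => elog (packSum μ q r) * (((Real.log r)⁻¹ : ℝ) : EReal)) (𝓝[>] (0:ℝ))

/-- Extended concave Legendre–Fenchel transform of `τ : ℝ → ℝ∪{−∞}` at `α ∈ ℝ∪{∞}`;
the `EReal` product `α * q` encodes the conventions `∞·q = −∞` for `q < 0`, `∞·0 = 0`. -/
def eLegendre (τ : ℝ → EReal) (α : EReal) : EReal :=
  sInf {v : EReal | ∃ q : ℝ, τ q ≠ ⊥ ∧ (α = ⊤ → q ≤ 0) ∧ v = α * (q : EReal) - τ q}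

/-- Legendre–Fenchel transform `f*` of a spectrum `f` defined on `ℝ∪{∞}`;
the `EReal` product `q * α` encodes the conventions `q·∞ = ±∞` for `q ≷ 0`, `0·∞ = 0`. -/
def specStar (f : EReal → EReal) (q : ℝ) : EReal :=
  sInf {v : EReal | ∃ α : EReal, α ≠ ⊥ ∧ f α ≠ ⊥ ∧ v = (q : EReal) * α - f α}

/-- `sup #{i : lo ≤ μ(B(x_i,r)) ≤ hi}` over all centered packings of radius `r`. -/
def ldCount {d : ℕ} (μ : Measure (Euc d)) (lo hi : ℝ≥0∞) (r : ℝ) : ℝ≥0∞ :=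
  ⨆ (P : Set (Euc d)) (_ : IsPacking μ r P),
    ({x ∈ P | lo ≤ μ (closedBall x r) ∧ μ (closedBall x r) ≤ hi}).encard

/-- `r ^ γ` for an extended exponent `γ`, with the convention `r^∞ = 0`. -/
def rpowE (r : ℝ) (γ : EReal) : ℝ≥0∞ :=
  if γ = ⊤ then 0 else if γ = ⊥ then ⊤ else ENNReal.ofReal (r ^ γ.toReal)

/-- The lower large-deviations spectrum `f̲^LD_μ(α,β)` for `0 ≤ α ≤ β ≤ ∞`. -/
def fLDlowAB {d : ℕ} (μ : Measure (Euc d)) (α β : EReal) : EReal :=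
  if α = ⊤ then
    ⨅ A : ℝ, Filter.liminf
      (fun r : ℝ => elog (ldCount μ 0 (ENNReal.ofReal (r ^ A)) r) * (((-Real.log r)⁻¹ : ℝ) : EReal))
      (𝓝[>] (0:ℝ))
  else
    ⨅ (ε : ℝ) (_ : 0 < ε), Filter.liminf
      (fun r : ℝ =>
        elog (ldCount μ (rpowE r (β + (ε : EReal))) (rpowE r (α - (ε : EReal))) r) *
          (((-Real.log r)⁻¹ : ℝ) : EReal))
      (𝓝[>] (0:ℝ))

/-- The lower large-deviations spectrum `f̲^LD_μ(α)`. -/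
def fLDlow {d : ℕ} (μ : Measure (Euc d)) (α : EReal) : EReal := fLDlowAB μ α α

/-- The upper large-deviations spectrum `f̄^LD_μ(α)`. -/
def fLDup {d : ℕ} (μ : Measure (Euc d)) (α : EReal) : EReal :=
  if α = ⊤ then
    ⨅ A : ℝ, Filter.limsup
      (fun r : ℝ => elog (ldCount μ 0 (ENNReal.ofReal (r ^ A)) r) * (((-Real.log r)⁻¹ : ℝ) : EReal))
      (𝓝[>] (0:ℝ))
  else
    ⨅ (ε : ℝ) (_ : 0 < ε), Filter.limsup
      (fun r : ℝ =>
        elog (ldCount μ (rpowE r (α + (ε : EReal))) (rpowE r (α - (ε : EReal))) r) *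
          (((-Real.log r)⁻¹ : ℝ) : EReal))
      (𝓝[>] (0:ℝ))

/-- `μ` is exact dimensional with dimension `D`. -/
def ExactDim {d : ℕ} (μ : Measure (Euc d)) (D : ℝ) : Prop :=
  ∀ᵐ x ∂μ, Filter.Tendsto (fun r : ℝ => Real.log (μ (closedBall x r)).toReal / Real.log r)
    (𝓝[>] (0:ℝ)) (𝓝 D)

/-- `μ` is homogeneously multifractal: the lower Hausdorff spectrum of the restriction of `μ`
to any closed ball whose interior meets `supp μ` coincides with that of `μ`. -/
def HMmeas {d : ℕ} (μ : Measure (Euc d)) : Prop :=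
  ∀ (c : Euc d) (R : ℝ), (interior (closedBall c R) ∩ msupp μ).Nonempty →
    ∀ α : EReal, 0 ≤ α →
      dimHE (Elow (μ.restrict (closedBall c R)) α) = dimHE (Elow μ α)

/-- The necessary properties of an `L^q`-spectrum in dimension `d`. -/
structure IsLqSpec (d : ℕ) (τ : ℝ → EReal) : Prop where
  ne_top : ∀ q : ℝ, τ q ≠ ⊤
  concave : ∀ q₁ q₂ t : ℝ, 0 ≤ t → t ≤ 1 →
    ((t : ℝ) : EReal) * τ q₁ + (((1 - t : ℝ)) : EReal) * τ q₂ ≤ τ (t * q₁ + (1 - t) * q₂)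
  mono : Monotone τ
  at_one : τ 1 = 0
  neg_d_le : -(((d : ℝ)) : EReal) ≤ τ 0
  le_zero : τ 0 ≤ 0
  dom : {q : ℝ | τ q ≠ ⊥} = Set.univ ∨ {q : ℝ | τ q ≠ ⊥} = Set.Ici 0
  star_nonneg : ∀ α : EReal, eLegendre τ α ≠ ⊥ → 0 ≤ eLegendre τ α

/-- The class `𝓕(d)` of candidate lower Hausdorff spectra, viewed as functions on
`ℝ∪{∞} ⊂ EReal` (the value at `⊥` is irrelevant: the domain condition forces `f ⊥ = ⊥`). -/
structure IsFd (d : ℕ) (f : EReal → EReal) : Prop where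
  hasFix : ∃ D : ℝ, f ((D : ℝ) : EReal) = ((D : ℝ) : EReal)
  dom_sub : {α : EReal | f α ≠ ⊥} ⊆ Set.Ici (0 : EReal)
  dom_closed : IsClosed {α : EReal | f α ≠ ⊥}
  range' : ∀ α : EReal, f α = ⊥ ∨ (0 ≤ f α ∧ f α ≤ ((d : ℝ) : EReal))
  usc : UpperSemicontinuousOn f {α : EReal | ⊥ < α}
  le_id : ∀ α : EReal, f α ≤ α

/-- Concavity of a spectrum on the real part of its domain. -/
def SpecConcave (f : EReal → EReal) : Prop :=
  ∀ α₁ α₂ t : ℝ, f ((α₁ : ℝ) : EReal) ≠ ⊥ → f ((α₂ : ℝ) : EReal) ≠ ⊥ → 0 ≤ t → t ≤ 1 →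
    ((t : ℝ) : EReal) * f ((α₁ : ℝ) : EReal) + (((1 - t : ℝ)) : EReal) * f ((α₂ : ℝ) : EReal) ≤
      f (((t * α₁ + (1 - t) * α₂ : ℝ)) : EReal)

/-!
A packing of radius `r` centred in the bounded set `supp μ` has `O(r⁻ᵈ)` balls, so a bound
`μ(B(x,r))^q ≤ C r^A` uniform on `supp μ` gives `τ_μ(q) ≥ A - d`, while a single ball gives
`τ_μ(q) ≤ M` as soon as `μ(B(x,r))^q ≥ r^M` for arbitrarily small `r`. For `q ≥ 0` every ball has
mass at most `μ(ℝ^d)`. For `q < 0`, finiteness of the limsup is a lower bound `μ(B(x,r)) ≥ r^A`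
uniform on the support, and its failure gives balls of mass `≤ r^M` for every `M`, forcing
`τ_μ(q) = -∞`.

For `τ_μ*`: `τ_μ(0) ≤ 0`, and if `τ_μ(q) > αq` then eventually every ball satisfies
`μ(B(x,r))^q ≤ r^v` for some `v > αq`. Raising this to the power `s ≥ 0` gives
`τ_μ(qs) ≥ vs - d`, so `αqs - τ_μ(qs) → -∞` and `τ_μ*(α) = -∞`.
-/

def logRatio (S : ℝ → ℝ≥0∞) (r : ℝ) : EReal :=
  elog (S r) * (((Real.log r)⁻¹ : ℝ) : EReal)

section LogRatio

variable {S : ℝ → ℝ≥0∞} {r M : ℝ}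

lemma elog_of_ne_zero_of_ne_top {x : ℝ≥0∞} (h0 : x ≠ 0) (htop : x ≠ ⊤) :
    elog x = ((Real.log x.toReal : ℝ) : EReal) := by
  simp [elog, h0, htop]

lemma le_logRatio_iff (hr0 : 0 < r) (hr1 : r < 1) :
    (M : EReal) ≤ logRatio S r ↔ S r ≤ ENNReal.ofReal (r ^ M) := by
  have hlog : Real.log r < 0 := Real.log_neg hr0 hr1
  rcases eq_or_ne (S r) 0 with h0 | h0
  · simp [logRatio, h0, elog, EReal.bot_mul_coe_of_neg (inv_lt_zero.2 hlog)]
  rcases eq_or_ne (S r) ⊤ with htop | htop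
  · simp [logRatio, htop, elog, EReal.top_mul_coe_of_neg (inv_lt_zero.2 hlog)]
  have hpos : 0 < (S r).toReal := ENNReal.toReal_pos h0 htop
  rw [logRatio, elog_of_ne_zero_of_ne_top h0 htop, ← EReal.coe_mul, EReal.coe_le_coe_iff,
    ← div_eq_mul_inv, le_div_iff_of_neg hlog, ENNReal.le_ofReal_iff_toReal_le htop
      (Real.rpow_pos_of_pos hr0 M).le, ← Real.log_le_log_iff hpos (Real.rpow_pos_of_pos hr0 M),
    Real.log_rpow hr0]

lemma logRatio_le_iff (hr0 : 0 < r) (hr1 : r < 1) :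
    logRatio S r ≤ M ↔ ENNReal.ofReal (r ^ M) ≤ S r := by
  have hlog : Real.log r < 0 := Real.log_neg hr0 hr1
  rcases eq_or_ne (S r) 0 with h0 | h0
  · simp [logRatio, h0, elog, EReal.bot_mul_coe_of_neg (inv_lt_zero.2 hlog),
      Real.rpow_pos_of_pos hr0 M]
  rcases eq_or_ne (S r) ⊤ with htop | htop
  · simp [logRatio, htop, elog, EReal.top_mul_coe_of_neg (inv_lt_zero.2 hlog)]
  have hpos : 0 < (S r).toReal := ENNReal.toReal_pos h0 htop
  rw [logRatio, elog_of_ne_zero_of_ne_top h0 htop, ← EReal.coe_mul, EReal.coe_le_coe_iff,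
    ← div_eq_mul_inv, div_le_iff_of_neg hlog, ENNReal.ofReal_le_iff_le_toReal htop,
    ← Real.log_le_log_iff (Real.rpow_pos_of_pos hr0 M) hpos, Real.log_rpow hr0]


lemma le_liminf_logRatio (C : ℝ) (h : ∀ᶠ r in 𝓝[>] 0, S r ≤ ENNReal.ofReal (C * r ^ M)) :
    (M : EReal) ≤ liminf (logRatio S) (𝓝[>] 0) := by
  refine EReal.ge_of_forall_gt_iff_ge.1 fun z hz => ?_
  have hzM : 0 < M - z := sub_pos.2 (EReal.coe_lt_coe_iff.1 hz)
  have hsmall : ∀ᶠ r in 𝓝[>] (0 : ℝ), C * r ^ (M - z) < 1 := by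
    have : Tendsto (fun r : ℝ => C * r ^ (M - z)) (𝓝[>] 0) (𝓝 (C * 0 ^ (M - z))) :=
      ((Real.continuousAt_rpow_const 0 _ (Or.inr hzM.le)).tendsto.mono_left
        nhdsWithin_le_nhds).const_mul C
    rw [Real.zero_rpow hzM.ne', mul_zero] at this
    exact this.eventually_lt_const one_pos
  refine le_liminf_of_le (by isBoundedDefault) ?_
  filter_upwards [h, hsmall, Ioo_mem_nhdsGT one_pos] with r hSr hCr ⟨hr0, hr1⟩
  refine (le_logRatio_iff hr0 hr1).2 (hSr.trans (ENNReal.ofReal_le_ofReal ?_))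
  calc C * r ^ M = C * r ^ (M - z) * r ^ z := by
        rw [mul_assoc, ← Real.rpow_add hr0, sub_add_cancel]
    _ ≤ 1 * r ^ z := by gcongr
    _ = r ^ z := one_mul _

lemma liminf_logRatio_le (h : ∃ᶠ r in 𝓝[>] 0, ENNReal.ofReal (r ^ M) ≤ S r) :
    liminf (logRatio S) (𝓝[>] 0) ≤ M := by
  refine liminf_le_of_frequently_le' ?_
  refine (h.and_eventually (Ioo_mem_nhdsGT one_pos)).mono ?_
  rintro r ⟨hSr, hr0, hr1⟩
  exact (logRatio_le_iff hr0 hr1).2 hSr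

lemma eventually_lt_of_lt_liminf_logRatio (h : (M : EReal) < liminf (logRatio S) (𝓝[>] 0)) :
    ∀ᶠ r in 𝓝[>] 0, S r < ENNReal.ofReal (r ^ M) := by
  filter_upwards [eventually_lt_of_lt_liminf h, Ioo_mem_nhdsGT one_pos] with r hr ⟨hr0, hr1⟩
  exact not_le.1 fun hle => hr.not_ge ((logRatio_le_iff hr0 hr1).2 hle)

lemma eventually_lt_of_limsup_logRatio_lt (h : limsup (logRatio S) (𝓝[>] 0) < M) :
    ∀ᶠ r in 𝓝[>] 0, ENNReal.ofReal (r ^ M) < S r := by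
  filter_upwards [eventually_lt_of_limsup_lt h, Ioo_mem_nhdsGT one_pos] with r hr ⟨hr0, hr1⟩
  exact not_le.1 fun hle => hr.not_ge ((le_logRatio_iff hr0 hr1).2 hle)

lemma frequently_lt_of_lt_limsup_logRatio (h : (M : EReal) < limsup (logRatio S) (𝓝[>] 0)) :
    ∃ᶠ r in 𝓝[>] 0, S r < ENNReal.ofReal (r ^ M) := by
  refine ((frequently_lt_of_lt_limsup (by isBoundedDefault) h).and_eventually
    (Ioo_mem_nhdsGT one_pos)).mono ?_
  rintro r ⟨hr, hr0, hr1⟩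
  exact not_le.1 fun hle => hr.not_ge ((logRatio_le_iff hr0 hr1).2 hle)

end LogRatio

lemma card_mul_pow_le_of_pairwiseDisjoint_closedBall {E : Type*} [NormedAddCommGroup E]
    [NormedSpace ℝ E] [FiniteDimensional ℝ E] {t : Finset E} {R r : ℝ} (hR : 0 ≤ R)
    (hr : 0 < r) (ht : ∀ y ∈ t, y ∈ closedBall (0 : E) R)
    (hdisj : (t : Set E).PairwiseDisjoint (closedBall · r)) :
    (t.card : ℝ) * r ^ Module.finrank ℝ E ≤ (R + r) ^ Module.finrank ℝ E := by
  let _ : MeasurableSpace E := borel E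
  have _ : BorelSpace E := ⟨rfl⟩
  set ν : Measure E := Measure.addHaar
  have hunit : ν (closedBall 0 1) ≠ 0 := (measure_closedBall_pos ν 0 one_pos).ne'
  have hunit' : ν (closedBall 0 1) ≠ ⊤ := measure_closedBall_lt_top.ne
  have hvol : (t.card : ℝ≥0∞) * ν (closedBall 0 r) ≤ ν (closedBall 0 (R + r)) :=
    calc (t.card : ℝ≥0∞) * ν (closedBall 0 r) = ∑ y ∈ t, ν (closedBall y r) := by
          simp [Measure.addHaar_closedBall_center]
      _ = ν (⋃ y ∈ t, closedBall y r) :=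
          (measure_biUnion_finset hdisj fun _ _ => measurableSet_closedBall).symm
      _ ≤ ν (closedBall 0 (R + r)) := by
          refine measure_mono (iUnion₂_subset fun y hy => closedBall_subset_closedBall' ?_)
          linarith [mem_closedBall.1 (ht y hy)]
  rw [Measure.addHaar_closedBall' ν 0 hr.le,
    Measure.addHaar_closedBall' ν 0 (r := R + r) (by linarith), ← mul_assoc,
    ENNReal.mul_le_mul_iff_left hunit hunit', ← ENNReal.ofReal_natCast,
    ← ENNReal.ofReal_mul (Nat.cast_nonneg _)] at hvol
  exact (ENNReal.ofReal_le_ofReal_iff (by positivity)).1 hvol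

lemma ENNReal.rpow_le_rpow_of_nonpos {a b : ℝ≥0∞} {q : ℝ} (hq : q ≤ 0) (hab : a ≤ b) :
    b ^ q ≤ a ^ q := by
  simpa only [ENNReal.rpow_neg, inv_inv] using
    ENNReal.inv_le_inv.2 (ENNReal.rpow_le_rpow hab (neg_nonneg.2 hq))

lemma eLegendre_le (τ : ℝ → EReal) {α : EReal} {q : ℝ} (hq : τ q ≠ ⊥) (hα : α = ⊤ → q ≤ 0) :
    eLegendre τ α ≤ α * q - τ q :=
  sInf_le ⟨q, hq, hα, rfl⟩

lemma eLegendre_nonneg (τ : ℝ → EReal) (h0 : τ 0 ≤ 0)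
    (hτ : ∀ a q : ℝ, ((a * q : ℝ) : EReal) < τ q → eLegendre τ a = ⊥) {α : EReal}
    (hα : eLegendre τ α ≠ ⊥) : 0 ≤ eLegendre τ α := by
  refine le_sInf ?_
  rintro _ ⟨q, hq, hqα, rfl⟩
  have hne : α * q - τ q ≠ ⊥ := fun h => hα (le_bot_iff.1 (h ▸ eLegendre_le τ hq hqα))
  have hzero : 0 ≤ α * (0 : ℝ) - τ 0 := by simpa using h0
  induction α using EReal.rec with
  | bot =>
    rcases lt_trichotomy q 0 with hq0 | rfl | hq0
    · have htop : τ q ≠ ⊤ := fun h => hne (by simp [h, EReal.bot_mul_coe_of_neg hq0])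
      simp [EReal.bot_mul_coe_of_neg hq0, EReal.top_sub htop]
    · exact hzero
    · simp [EReal.bot_mul_coe_of_pos hq0] at hne
  | coe a =>
    have hle : τ q ≤ a * q := not_lt.1 fun h => hα (hτ a q (by exact_mod_cast h))
    exact (EReal.sub_nonneg (Or.inl (EReal.coe_mul a q ▸ EReal.coe_ne_top _))
      (Or.inr hq)).2 hle
  | top =>
    rcases (hqα rfl).lt_or_eq with hq0 | rfl
    · simp [EReal.top_mul_coe_of_neg hq0] at hne
    · exact hzero


section Spectrum

variable {d : ℕ} {μ : Measure (Euc d)}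

lemma msupp_eq_support : msupp μ = μ.support := by
  ext x
  exact nhds_basis_closedBall.mem_measureSupport.symm

lemma McPlus.msupp_nonempty (hμ : McPlus μ) : (msupp μ).Nonempty :=
  msupp_eq_support ▸ Measure.nonempty_support hμ.2.1

lemma McPlus.exists_msupp_subset_closedBall (hμ : McPlus μ) :
    ∃ R, 0 ≤ R ∧ msupp μ ⊆ closedBall 0 R := by
  obtain ⟨-, -, K, hK, hKc⟩ := hμ
  obtain ⟨R, hR⟩ := hK.isBounded.subset_closedBall 0
  refine ⟨max R 0, le_max_right _ _, fun x hx => ?_⟩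
  have hxK : x ∈ K :=
    Measure.support_subset_of_isClosed hK.isClosed (mem_ae_iff.2 hKc)
      (msupp_eq_support ▸ hx)
  exact closedBall_subset_closedBall (le_max_left R 0) (hR hxK)

lemma le_packSum {x : Euc d} (hx : x ∈ msupp μ) (q r : ℝ) :
    μ (closedBall x r) ^ q ≤ packSum μ q r := by
  have hP : IsPacking μ r {x} := ⟨singleton_subset_iff.2 hx, pairwiseDisjoint_singleton _ _⟩
  refine le_iSup₂_of_le (f := fun P (_ : IsPacking μ r P) => ∑' y : P, _) {x} hP ?_
  rw [tsum_singleton x (fun y => μ (closedBall y r) ^ q)]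

lemma packSum_le {R r q : ℝ} (hR : 0 ≤ R) (hsub : msupp μ ⊆ closedBall 0 R) (hr : 0 < r)
    {b : ℝ≥0∞} (hb : ∀ x ∈ msupp μ, μ (closedBall x r) ^ q ≤ b) :
    packSum μ q r ≤ ENNReal.ofReal (((R + r) / r) ^ d) * b := by
  refine iSup₂_le fun P hP => ?_
  rw [ENNReal.tsum_eq_iSup_sum]
  refine iSup_le fun s => ?_
  have hcard : (s.card : ℝ) ≤ ((R + r) / r) ^ d := by
    have h := card_mul_pow_le_of_pairwiseDisjoint_closedBall hR hr
      (t := s.map (Function.Embedding.subtype _)) (by simpa using fun y hy _ => hsub (hP.1 hy))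
      (hP.2.subset (by simp))
    rw [finrank_euclideanSpace_fin, Finset.card_map] at h
    rwa [div_pow, le_div_iff₀ (by positivity)]
  calc ∑ x ∈ s, μ (closedBall (x : Euc d) r) ^ q ≤ ∑ _x ∈ s, b :=
        Finset.sum_le_sum fun x _ => hb x (hP.1 x.2)
    _ = (s.card : ℝ≥0∞) * b := by rw [Finset.sum_const, nsmul_eq_mul]
    _ ≤ ENNReal.ofReal (((R + r) / r) ^ d) * b := by
        gcongr
        rw [← ENNReal.ofReal_natCast]
        exact ENNReal.ofReal_le_ofReal hcard

lemma le_tauLow {R q A : ℝ} (C : ℝ) (hR : 0 ≤ R) (hsub : msupp μ ⊆ closedBall 0 R)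
    (hC : 0 ≤ C)
    (h : ∀ᶠ r in 𝓝[>] 0, ∀ x ∈ msupp μ, μ (closedBall x r) ^ q ≤ ENNReal.ofReal (C * r ^ A)) :
    ((A - d : ℝ) : EReal) ≤ tauLow μ q := by
  refine le_liminf_logRatio ((R + 1) ^ d * C) ?_
  filter_upwards [h, Ioo_mem_nhdsGT one_pos] with r hb ⟨hr0, hr1⟩
  refine (packSum_le hR hsub hr0 hb).trans ?_
  rw [← ENNReal.ofReal_mul (by positivity)]
  refine ENNReal.ofReal_le_ofReal ?_
  calc ((R + r) / r) ^ d * (C * r ^ A) ≤ ((R + 1) / r) ^ d * (C * r ^ A) := by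
        gcongr
    _ = (R + 1) ^ d * C * r ^ (A - d) := by
        rw [div_pow, Real.rpow_sub hr0, Real.rpow_natCast]
        field_simp

lemma tauLow_le {q M : ℝ}
    (h : ∃ᶠ r in 𝓝[>] 0, ∃ x ∈ msupp μ, ENNReal.ofReal (r ^ M) ≤ μ (closedBall x r) ^ q) :
    tauLow μ q ≤ M :=
  liminf_logRatio_le (h.mono fun r ⟨_, hx, hle⟩ => hle.trans (le_packSum hx q r))

lemma tauLow_zero_nonpos (hμ : McPlus μ) : tauLow μ 0 ≤ 0 := by
  obtain ⟨x, hx⟩ := hμ.msupp_nonempty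
  exact tauLow_le (M := 0) (Eventually.of_forall fun r => ⟨x, hx, by simp⟩).frequently

lemma tauLow_ne_bot_of_nonneg (hμ : McPlus μ) {q : ℝ} (hq : 0 ≤ q) : tauLow μ q ≠ ⊥ := by
  have := hμ.1
  obtain ⟨R, hR, hsub⟩ := hμ.exists_msupp_subset_closedBall
  refine ne_bot_of_le_ne_bot (EReal.coe_ne_bot _)
    (le_tauLow (A := 0) (μ univ ^ q).toReal hR hsub ENNReal.toReal_nonneg ?_)
  refine Eventually.of_forall fun r _ _ => ?_
  rw [Real.rpow_zero, mul_one, ENNReal.ofReal_toReal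
    (ENNReal.rpow_ne_top_of_nonneg hq (measure_ne_top μ univ))]
  exact ENNReal.rpow_le_rpow (measure_mono (subset_univ _)) hq

lemma tauLow_ne_bot_of_limsup_lt_top (hμ : McPlus μ)
    (hL : limsup (logRatio fun r => ⨅ x ∈ msupp μ, μ (closedBall x r)) (𝓝[>] 0) < ⊤) (q : ℝ) :
    tauLow μ q ≠ ⊥ := by
  rcases le_or_gt 0 q with hq | hq
  · exact tauLow_ne_bot_of_nonneg hμ hq
  obtain ⟨R, hR, hsub⟩ := hμ.exists_msupp_subset_closedBall
  obtain ⟨A, hLA, -⟩ := EReal.lt_iff_exists_real_btwn.1 hL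
  refine ne_bot_of_le_ne_bot (EReal.coe_ne_bot _)
    (le_tauLow (A := A * q) 1 hR hsub zero_le_one ?_)
  filter_upwards [eventually_lt_of_limsup_logRatio_lt hLA, self_mem_nhdsWithin]
    with r hr (hr0 : 0 < r) x hx
  calc μ (closedBall x r) ^ q ≤ ENNReal.ofReal (r ^ A) ^ q :=
        ENNReal.rpow_le_rpow_of_nonpos hq.le (hr.le.trans (iInf₂_le x hx))
    _ = ENNReal.ofReal (1 * r ^ (A * q)) := by
        rw [ENNReal.ofReal_rpow_of_pos (Real.rpow_pos_of_pos hr0 A), ← Real.rpow_mul hr0.le,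
          one_mul]

lemma tauLow_eq_bot_of_limsup_eq_top
    (hL : limsup (logRatio fun r => ⨅ x ∈ msupp μ, μ (closedBall x r)) (𝓝[>] 0) = ⊤)
    {q : ℝ} (hq : q < 0) : tauLow μ q = ⊥ := by
  refine (EReal.eq_bot_iff_forall_lt _).2 fun c => ?_
  refine lt_of_le_of_lt ?_ (EReal.coe_lt_coe_iff.2 (sub_one_lt c))
  refine tauLow_le ?_
  have hsmall :=
    frequently_lt_of_lt_limsup_logRatio (M := (c - 1) / q) (hL ▸ EReal.coe_lt_top _)
  refine (hsmall.and_eventually self_mem_nhdsWithin).mono fun r ⟨hr, (hr0 : 0 < r)⟩ => ?_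
  obtain ⟨x, hx, hxr⟩ :
      ∃ x ∈ msupp μ, μ (closedBall x r) < ENNReal.ofReal (r ^ ((c - 1) / q)) := by
    simpa only [iInf_lt_iff, exists_prop] using hr
  refine ⟨x, hx, ?_⟩
  calc ENNReal.ofReal (r ^ (c - 1)) = ENNReal.ofReal (r ^ ((c - 1) / q)) ^ q := by
        rw [ENNReal.ofReal_rpow_of_pos (Real.rpow_pos_of_pos hr0 _), ← Real.rpow_mul hr0.le,
          div_mul_cancel₀ _ hq.ne]
    _ ≤ μ (closedBall x r) ^ q := ENNReal.rpow_le_rpow_of_nonpos hq.le hxr.le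

lemma eLegendre_tauLow_eq_bot_of_lt (hμ : McPlus μ) {a q : ℝ}
    (h : ((a * q : ℝ) : EReal) < tauLow μ q) : eLegendre (tauLow μ) a = ⊥ := by
  obtain ⟨R, hR, hsub⟩ := hμ.exists_msupp_subset_closedBall
  obtain ⟨v, hav, hv⟩ := EReal.lt_iff_exists_real_btwn.1 h
  have hav : a * q < v := EReal.coe_lt_coe_iff.1 hav
  have hball :
      ∀ᶠ r in 𝓝[>] 0, ∀ y ∈ msupp μ, μ (closedBall y r) ^ q ≤ ENNReal.ofReal (r ^ v) :=
    (eventually_lt_of_lt_liminf_logRatio hv).mono fun r hr y hy =>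
      (le_packSum hy q r).trans hr.le
  have hscale (s : ℝ) (hs : 0 ≤ s) : ((v * s - d : ℝ) : EReal) ≤ tauLow μ (q * s) := by
    refine le_tauLow 1 hR hsub zero_le_one ?_
    filter_upwards [hball, self_mem_nhdsWithin] with r hr (hr0 : 0 < r) y hy
    calc μ (closedBall y r) ^ (q * s)
        = (μ (closedBall y r) ^ q) ^ s := ENNReal.rpow_mul _ _ _
      _ ≤ ENNReal.ofReal (r ^ v) ^ s := ENNReal.rpow_le_rpow (hr y hy) hs
      _ = ENNReal.ofReal (1 * r ^ (v * s)) := by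
        rw [ENNReal.ofReal_rpow_of_pos (Real.rpow_pos_of_pos hr0 v), ← Real.rpow_mul hr0.le,
          one_mul]
  refine (EReal.eq_bot_iff_forall_lt _).2 fun c => ?_
  set s := (|c| + d + 1) / (v - a * q)
  have hs : 0 ≤ s := by positivity
  have hslope : (v - a * q) * s = |c| + d + 1 := mul_div_cancel₀ _ (sub_pos.2 hav).ne'
  calc eLegendre (tauLow μ) a ≤ a * ((q * s : ℝ) : EReal) - tauLow μ (q * s) :=
        eLegendre_le _ (ne_bot_of_le_ne_bot (EReal.coe_ne_bot _) (hscale s hs)) (by simp)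
    _ ≤ ((a * (q * s) - (v * s - d) : ℝ) : EReal) := by
        rw [EReal.coe_sub, EReal.coe_mul]
        exact EReal.sub_le_sub le_rfl (hscale s hs)
    _ < c := by
        refine EReal.coe_lt_coe_iff.2 ?_
        linarith [neg_abs_le c]

end Spectrum

theorem statement3_general (d : ℕ) (μ : Measure (Euc d)) (hμ : McPlus μ) :
    (∀ L : EReal,
      L = Filter.limsup
          (fun r : ℝ => elog (⨅ x ∈ msupp μ, μ (closedBall x r)) * (((Real.log r)⁻¹ : ℝ) : EReal))
          (𝓝[>] (0:ℝ)) →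
      (L < ⊤ → {q : ℝ | tauLow μ q ≠ ⊥} = Set.univ) ∧
      (¬ L < ⊤ → {q : ℝ | tauLow μ q ≠ ⊥} = Set.Ici 0)) ∧
    (∀ α : EReal, eLegendre (tauLow μ) α ≠ ⊥ → 0 ≤ eLegendre (tauLow μ) α) := by
  refine ⟨fun L hL => ⟨fun hlt => ?_, fun hnlt => ?_⟩, fun α =>
    eLegendre_nonneg _ (tauLow_zero_nonpos hμ) fun a q => eLegendre_tauLow_eq_bot_of_lt hμ⟩
  · exact eq_univ_of_forall (tauLow_ne_bot_of_limsup_lt_top hμ (hL ▸ hlt))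
  · have hL : limsup (logRatio fun r => ⨅ x ∈ msupp μ, μ (closedBall x r)) (𝓝[>] 0) = ⊤ :=
      top_le_iff.1 (hL ▸ not_lt.1 hnlt)
    ext q
    exact ⟨fun hq => not_lt.1 fun hq0 => hq (tauLow_eq_bot_of_limsup_eq_top hL hq0),
      tauLow_ne_bot_of_nonneg hμ⟩

/-- Proposition 1.3(2): characterization of the domain of `τ_μ`,
and non-negativity of `τ_μ*` on its domain. -/
theorem statement3 (d : ℕ) (hd : 1 ≤ d) (μ : Measure (Euc d)) (hμ : McPlus μ) :
    (∀ L : EReal,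
      L = Filter.limsup
          (fun r : ℝ => elog (⨅ x ∈ msupp μ, μ (closedBall x r)) * (((Real.log r)⁻¹ : ℝ) : EReal))
          (𝓝[>] (0:ℝ)) →
      (L < ⊤ → {q : ℝ | tauLow μ q ≠ ⊥} = Set.univ) ∧
      (¬ L < ⊤ → {q : ℝ | tauLow μ q ≠ ⊥} = Set.Ici 0)) ∧
    (∀ α : EReal, eLegendre (tauLow μ) α ≠ ⊥ → 0 ≤ eLegendre (tauLow μ) α) :=
  statement3_general d μ hμ

end
end

section
/- Let d ≥ 1 and let τ : ℝ → ℝ∪{−∞} satisfy the necessary properties of an L^q-spectrum in dimension d, with dom(τ) = [0,∞), τ(0) < 0, and τ continuous at 0⁺ (i.e. lim_{q→0⁺} τ(q) = τ(0)). Set τ'(∞) = lim_{q→+∞} τ(q)/q and let τ'(0⁺) ∈ (0,∞] be the right derivative of τ at 0. Then: τ*(∞) = −τ(0); {α ∈ ℝ∪{∞} : τ*(α) > −∞} = [τ'(∞), ∞]∪{∞}, i.e. the interval [τ'(∞),∞]; τ* is concave, continuous and non-decreasing on [τ'(∞),∞), increasing on [τ'(∞), τ'(0⁺)); if τ'(0⁺)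 < ∞ then τ*(α) = −τ(0) for every α ∈ [τ'(0⁺),∞); and τ* is continuous at ∞, i.e. lim_{α→∞} τ*(α) = τ*(∞) = −τ(0). -/
open MeasureTheory Metric Set Filter Topology
open scoped ENNReal NNReal

noncomputable section

/-
For `q ≥ 0` let `t q` be the real number `τ q`. At a real `α`, `τ*(α)` is the infimum of the affine
functions `α ↦ α q - t q`, `q ≥ 0`; it is finite exactly when `α ≥ τ'(∞)` because `t q / q → τ'(∞)`,
and there it is concave and nondecreasing. The condition `τ* ≥ 0` forces `t q ≤ τ'(∞) q`, so for
large `α` only small `q` matter, and continuity of `t` at `0⁺` gives `τ*(α) → -t 0`. A concave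
nondecreasing function lying strictly below its limit at infinity is strictly increasing there, and
`τ*(α) < -t 0` as soon as `α` is below one secant slope `(t q - t 0) / q`, i.e. when `α < τ'(0⁺)`.
By concavity these slopes never exceed `τ'(0⁺)`, whence `τ*(α) = -t 0` for `α ≥ τ'(0⁺)`.
-/

lemma EReal.sInf_image_coe_of_bddBelow {S : Set ℝ} (hne : S.Nonempty) (hS : BddBelow S) :
    sInf (((↑) : ℝ → EReal) '' S) = ↑(sInf S) :=
  (Monotone.map_csInf_of_continuousAt continuous_coe_real_ereal.continuousAt
    EReal.coe_strictMono.monotone hne hS).symm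

lemma EReal.sInf_image_coe_of_not_bddBelow {S : Set ℝ} (hS : ¬BddBelow S) :
    sInf (((↑) : ℝ → EReal) '' S) = ⊥ := by
  refine sInf_eq_bot.2 fun b hb => ?_
  obtain ⟨x, -, hxb⟩ := EReal.lt_iff_exists_real_btwn.1 hb
  obtain ⟨y, hyS, hyx⟩ := not_bddBelow_iff.1 hS x
  exact ⟨y, mem_image_of_mem _ hyS, (EReal.coe_lt_coe_iff.2 hyx).trans hxb⟩

-- `sInf` of a set unbounded below is `0` in `ℝ`: this is `τ*` only where the values are
-- bounded below.
def legendreIci (t : ℝ → ℝ) (α : ℝ) : ℝ :=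
  sInf ((fun q => α * q - t q) '' Ici 0)

section LegendreIci

variable {t : ℝ → ℝ} {a α m : ℝ}

lemma le_legendreIci (h : ∀ q, 0 ≤ q → m ≤ α * q - t q) : m ≤ legendreIci t α :=
  le_csInf (nonempty_Ici.image _) (forall_mem_image.2 h)

lemma legendreIci_le (hbdd : BddBelow ((fun q => α * q - t q) '' Ici 0)) {q : ℝ} (hq : 0 ≤ q) :
    legendreIci t α ≤ α * q - t q :=
  csInf_le hbdd (mem_image_of_mem _ hq)

lemma bddBelow_image_of_le_mul (hlin : ∀ q, 0 ≤ q → t q ≤ a * q) (hα : a ≤ α) :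
    BddBelow ((fun q => α * q - t q) '' Ici 0) :=
  ⟨0, forall_mem_image.2 fun q hq => by
    nlinarith [hlin q hq, mul_le_mul_of_nonneg_right hα (show (0 : ℝ) ≤ q from hq)]⟩

lemma bddBelow_image_of_lt (hmono : MonotoneOn t (Ici 0))
    (hlim : Tendsto (fun q => t q / q) atTop (𝓝 a)) (hα : a < α) :
    BddBelow ((fun q => α * q - t q) '' Ici 0) := by
  obtain ⟨Q, hQ⟩ := eventually_atTop.1
    ((hlim.eventually (gt_mem_nhds hα)).and (eventually_gt_atTop 0))
  set Q' := max Q 0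
  refine ⟨min 0 (-|α| * Q' - t Q'), forall_mem_image.2 fun q (hq : 0 ≤ q) => ?_⟩
  rcases le_total q Q' with hqQ | hQq
  · have htq := hmono hq (le_max_right Q 0) hqQ
    have hαq : -|α| * Q' ≤ α * q := by
      nlinarith [mul_nonneg (by linarith [neg_abs_le α] : 0 ≤ α + |α|) hq,
        mul_nonneg (abs_nonneg α) (sub_nonneg.2 hqQ)]
    exact (min_le_right _ _).trans (by linarith)
  · obtain ⟨hslope, hq⟩ := hQ q (le_of_max_le_left hQq)
    rw [div_lt_iff₀ hq] at hslope
    exact (min_le_left _ _).trans (by linarith)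

lemma not_bddBelow_image_of_lt (hlim : Tendsto (fun q => t q / q) atTop (𝓝 a)) (hα : α < a) :
    ¬BddBelow ((fun q => α * q - t q) '' Ici 0) := by
  rintro ⟨m, hm⟩
  have hbound : Tendsto (fun q : ℝ => α - m / q) atTop (𝓝 α) := by
    have hdecay : Tendsto (fun q : ℝ => m / q) atTop (𝓝 0) :=
      tendsto_const_nhds.div_atTop tendsto_id
    simpa using hdecay.const_sub α
  refine hα.not_ge (le_of_tendsto_of_tendsto hlim hbound ?_)
  filter_upwards [eventually_gt_atTop 0] with q hq
  have := hm (mem_image_of_mem _ (show q ∈ Ici 0 from hq.le))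
  rw [div_le_iff₀ hq, sub_mul, div_mul_cancel₀ _ hq.ne']
  linarith

lemma monotoneOn_legendreIci (hlin : ∀ q, 0 ≤ q → t q ≤ a * q) :
    MonotoneOn (legendreIci t) (Ici a) :=
  fun α hα β _ hαβ => le_legendreIci fun q hq => by
    nlinarith [legendreIci_le (bddBelow_image_of_le_mul hlin hα) hq,
      mul_le_mul_of_nonneg_right hαβ hq]

lemma concaveOn_legendreIci (hlin : ∀ q, 0 ≤ q → t q ≤ a * q) :
    ConcaveOn ℝ (Ici a) (legendreIci t) := by
  refine ⟨convex_Ici a, fun α hα β hβ u v hu hv huv => le_legendreIci fun q hq => ?_⟩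
  have hα' := mul_le_mul_of_nonneg_left (legendreIci_le (bddBelow_image_of_le_mul hlin hα) hq) hu
  have hβ' := mul_le_mul_of_nonneg_left (legendreIci_le (bddBelow_image_of_le_mul hlin hβ) hq) hv
  simp only [smul_eq_mul]
  linear_combination hα' + hβ' - t q * huv

lemma continuousOn_legendreIci (hlin : ∀ q, 0 ≤ q → t q ≤ a * q) :
    ContinuousOn (legendreIci t) (Ici a) := by
  intro α hα
  rcases (mem_Ici.1 hα).eq_or_lt with rfl | haα
  · -- at `a` itself: below by monotonicity, above by one of the affine functions of the infimum
    refine tendsto_order.2 ⟨fun l hl => eventually_nhdsWithin_of_forall fun β hβ =>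
      hl.trans_le (monotoneOn_legendreIci hlin self_mem_Ici hβ hβ), fun u hu => ?_⟩
    obtain ⟨_, ⟨q, hq, rfl⟩, hqu⟩ := exists_lt_of_csInf_lt (nonempty_Ici.image _) hu
    have hcont : Tendsto (fun β => β * q - t q) (𝓝 a) (𝓝 (a * q - t q)) :=
      ((continuous_mul_const q).sub continuous_const).tendsto a
    filter_upwards [nhdsWithin_le_nhds (hcont.eventually (gt_mem_nhds hqu)),
      self_mem_nhdsWithin] with β hβu hβ
    exact (legendreIci_le (bddBelow_image_of_le_mul hlin hβ) hq).trans_lt hβu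
  · have hint : α ∈ interior (Ici a) := by rwa [interior_Ici]
    exact ((concaveOn_legendreIci hlin).continuousOn_interior.continuousAt
      (isOpen_interior.mem_nhds hint)).continuousWithinAt

lemma tendsto_legendreIci (hlin : ∀ q, 0 ≤ q → t q ≤ a * q)
    (hcont : ContinuousWithinAt t (Ici 0) 0) :
    Tendsto (legendreIci t) atTop (𝓝 (-t 0)) := by
  refine tendsto_order.2 ⟨fun l hl => ?_, fun u hu => ?_⟩
  · obtain ⟨m, hlm, hm⟩ := exists_between hl
    obtain ⟨δ, hδ, hsmall⟩ := mem_nhdsGE_iff_exists_Ico_subset.1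
      (hcont (gt_mem_nhds (show t 0 < -m by linarith)))
    filter_upwards [eventually_ge_atTop 0, eventually_ge_atTop a,
      eventually_ge_atTop (a + m / δ)] with α hα₀ hαa hαm
    refine hlm.trans_le (le_legendreIci fun q hq => ?_)
    rcases lt_or_ge q δ with hqδ | hδq
    · have htq : t q < -m := hsmall ⟨hq, hqδ⟩
      nlinarith [mul_nonneg hα₀ hq]
    · have hmδ : m ≤ (α - a) * δ := (div_le_iff₀ hδ).1 (by linarith)
      nlinarith [hlin q hq, mul_le_mul_of_nonneg_left hδq (sub_nonneg.2 hαa)]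
  · filter_upwards [eventually_ge_atTop a] with α hα
    exact (legendreIci_le (bddBelow_image_of_le_mul hlin hα) le_rfl).trans_lt (by simpa using hu)

lemma ConcaveOn.strictMonoOn_of_tendsto_atTop {f : ℝ → ℝ} {L : ℝ} (hf : ConcaveOn ℝ (Ici a) f)
    (hmono : MonotoneOn f (Ici a)) (hlim : Tendsto f atTop (𝓝 L)) :
    StrictMonoOn f {x | a ≤ x ∧ f x < L} := by
  rintro x ⟨hx, hxL⟩ y ⟨hy, -⟩ hxy
  refine (hmono hx hy hxy.le).lt_of_ne fun hfxy => hxL.not_ge ?_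
  -- a flat piece of a concave nondecreasing function stays flat up to infinity
  refine le_of_tendsto hlim ((eventually_gt_atTop y).mono fun z hyz => ?_)
  have hslope := hf.slope_anti_adjacent hx (show z ∈ Ici a from hy.trans hyz.le) hxy hyz
  rw [← hfxy, sub_self, zero_div, div_le_iff₀ (sub_pos.2 hyz)] at hslope
  linarith

lemma legendreIci_lt_neg_of_lt_slope (hbdd : BddBelow ((fun q => α * q - t q) '' Ici 0))
    {q : ℝ} (hq : 0 < q) (hα : α < slope t 0 q) : legendreIci t α < -t 0 := by
  rw [slope_def_field, sub_zero, lt_div_iff₀ hq] at hα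
  linarith [legendreIci_le hbdd hq.le]

lemma strictMonoOn_legendreIci (hlin : ∀ q, 0 ≤ q → t q ≤ a * q)
    (hcont : ContinuousWithinAt t (Ici 0) 0) {B : EReal}
    (hB : Tendsto (fun q => (slope t 0 q : EReal)) (𝓝[>] 0) (𝓝 B)) :
    StrictMonoOn (legendreIci t) {α | a ≤ α ∧ (α : EReal) < B} := by
  refine ((concaveOn_legendreIci hlin).strictMonoOn_of_tendsto_atTop
    (monotoneOn_legendreIci hlin) (tendsto_legendreIci hlin hcont)).mono ?_
  rintro α ⟨hα, hαB⟩
  obtain ⟨q, hαq, hq⟩ := ((hB.eventually (eventually_gt_nhds hαB)).and self_mem_nhdsWithin).exists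
  exact ⟨hα, legendreIci_lt_neg_of_lt_slope (bddBelow_image_of_le_mul hlin hα) hq
    (EReal.coe_lt_coe_iff.1 hαq)⟩

lemma slope_le_of_tendsto (hconc : ConcaveOn ℝ (Ici 0) t) {B : EReal}
    (hB : Tendsto (fun q => (slope t 0 q : EReal)) (𝓝[>] 0) (𝓝 B)) {q : ℝ} (hq : 0 < q) :
    (slope t 0 q : EReal) ≤ B := by
  refine ge_of_tendsto hB ?_
  filter_upwards [Ioc_mem_nhdsGT hq] with p hp
  exact EReal.coe_le_coe_iff.2
    (hconc.slope_anti self_mem_Ici ⟨hp.1.le, hp.1.ne'⟩ ⟨hq.le, hq.ne'⟩ hp.2)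

lemma isLeast_image_of_slope_le (h : ∀ q, 0 < q → slope t 0 q ≤ α) :
    IsLeast ((fun q => α * q - t q) '' Ici 0) (-t 0) := by
  refine ⟨⟨0, self_mem_Ici, by simp⟩, forall_mem_image.2 fun q (hq : 0 ≤ q) => ?_⟩
  rcases hq.eq_or_lt with rfl | hq
  · simp
  · have := h q hq
    rw [slope_def_field, sub_zero, div_le_iff₀ hq] at this
    linarith

end LegendreIci

section Spectrum

variable {d : ℕ} {τ : ℝ → EReal} {a : ℝ}

lemma eLegendre_top (hdom : {q : ℝ | τ q ≠ ⊥} = Ici 0) : eLegendre τ ⊤ = -τ 0 := by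
  have hset : {v : EReal | ∃ q : ℝ, τ q ≠ ⊥ ∧ ((⊤ : EReal) = ⊤ → q ≤ 0) ∧
      v = ⊤ * (q : EReal) - τ q} = {-τ 0} := by
    ext v
    constructor
    · rintro ⟨q, hq, hq0, rfl⟩
      obtain rfl : q = 0 := le_antisymm (hq0 rfl) (hdom.subset hq)
      simp
    · rintro rfl
      exact ⟨0, hdom.symm.subset self_mem_Ici, fun _ => le_rfl, by simp⟩
  rw [eLegendre, hset, sInf_singleton]

lemma eLegendre_bot (h1 : τ 1 = 0) : eLegendre τ ⊥ = ⊥ :=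
  le_bot_iff.1 <| sInf_le ⟨1, by simp [h1], fun h => absurd h bot_ne_top,
    by rw [h1, sub_zero, EReal.bot_mul_coe_of_pos one_pos]⟩

namespace IsLqSpec

lemma coe_toReal (hτ : IsLqSpec d τ) (hdom : {q : ℝ | τ q ≠ ⊥} = Ici 0) {q : ℝ} (hq : 0 ≤ q) :
    ((τ q).toReal : EReal) = τ q :=
  EReal.coe_toReal (hτ.ne_top q) (hdom.symm.subset hq)

lemma monotoneOn_toReal (hτ : IsLqSpec d τ) (hdom : {q : ℝ | τ q ≠ ⊥} = Ici 0) :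
    MonotoneOn (fun q => (τ q).toReal) (Ici 0) :=
  fun _ hp _ _ hpq => EReal.toReal_le_toReal (hτ.mono hpq) (hdom.symm.subset hp) (hτ.ne_top _)

lemma concaveOn_toReal (hτ : IsLqSpec d τ) (hdom : {q : ℝ | τ q ≠ ⊥} = Ici 0) :
    ConcaveOn ℝ (Ici 0) (fun q => (τ q).toReal) := by
  refine ⟨convex_Ici 0, fun p hp q hq u v hu hv huv => ?_⟩
  have hpq := convex_Ici (0 : ℝ) hp hq hu hv huv
  obtain rfl : v = 1 - u := by linarith
  have h := hτ.concave p q u hu (by linarith)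
  simp only [smul_eq_mul] at hpq ⊢
  rw [← hτ.coe_toReal hdom hp, ← hτ.coe_toReal hdom hq, ← hτ.coe_toReal hdom hpq] at h
  exact_mod_cast h

lemma continuousWithinAt_toReal (hτ : IsLqSpec d τ) (hdom : {q : ℝ | τ q ≠ ⊥} = Ici 0)
    (hcont : Tendsto τ (𝓝[>] 0) (𝓝 (τ 0))) :
    ContinuousWithinAt (fun q => (τ q).toReal) (Ici 0) 0 :=
  continuousWithinAt_Ioi_iff_Ici.1
    ((EReal.tendsto_toReal (hτ.ne_top 0) (hdom.symm.subset self_mem_Ici)).comp hcont)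

lemma tendsto_slope_toReal (hτ : IsLqSpec d τ) (hdom : {q : ℝ | τ q ≠ ⊥} = Ici 0) {B : EReal}
    (hB : Tendsto (fun q : ℝ => (τ q - τ 0) * ((q⁻¹ : ℝ) : EReal)) (𝓝[>] 0) (𝓝 B)) :
    Tendsto (fun q => (slope (fun q => (τ q).toReal) 0 q : EReal)) (𝓝[>] 0) (𝓝 B) :=
  hB.congr' <| eventually_nhdsWithin_of_forall fun q (hq : 0 < q) => by
    simp only [slope_def_field, sub_zero, div_eq_mul_inv, EReal.coe_mul, EReal.coe_sub,
      hτ.coe_toReal hdom hq.le, hτ.coe_toReal hdom le_rfl]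

lemma eLegendre_coe_eq_sInf (hτ : IsLqSpec d τ) (hdom : {q : ℝ | τ q ≠ ⊥} = Ici 0) (α : ℝ) :
    eLegendre τ α = sInf (((↑) : ℝ → EReal) '' ((fun q => α * q - (τ q).toReal) '' Ici 0)) := by
  rw [eLegendre, image_image]
  congr 1
  ext v
  constructor
  · rintro ⟨q, hq, -, rfl⟩
    exact ⟨q, hdom.subset hq, by
      simp only [EReal.coe_sub, EReal.coe_mul, hτ.coe_toReal hdom (hdom.subset hq)]⟩
  · rintro ⟨q, hq, rfl⟩
    exact ⟨q, hdom.symm.subset hq, fun h => absurd h (EReal.coe_ne_top α),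
      by simp only [EReal.coe_sub, EReal.coe_mul, hτ.coe_toReal hdom hq]⟩

lemma eLegendre_coe_of_bddBelow (hτ : IsLqSpec d τ) (hdom : {q : ℝ | τ q ≠ ⊥} = Ici 0) {α : ℝ}
    (hbdd : BddBelow ((fun q => α * q - (τ q).toReal) '' Ici 0)) :
    eLegendre τ α = legendreIci (fun q => (τ q).toReal) α := by
  rw [hτ.eLegendre_coe_eq_sInf hdom, EReal.sInf_image_coe_of_bddBelow (nonempty_Ici.image _) hbdd,
    legendreIci]

lemma toReal_le_mul (hτ : IsLqSpec d τ) (hdom : {q : ℝ | τ q ≠ ⊥} = Ici 0)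
    (ha : Tendsto (fun q : ℝ => (τ q).toReal / q) atTop (𝓝 a)) {q : ℝ} (hq : 0 ≤ q) :
    (τ q).toReal ≤ a * q := by
  have hgt : ∀ α ∈ Ioi a, (τ q).toReal ≤ α * q := fun α hα => by
    have hbdd := bddBelow_image_of_lt (hτ.monotoneOn_toReal hdom) ha hα
    have hF := hτ.eLegendre_coe_of_bddBelow hdom hbdd
    have hnonneg : (0 : EReal) ≤ legendreIci (fun q => (τ q).toReal) α :=
      hF ▸ hτ.star_nonneg α (hF ▸ EReal.coe_ne_bot _)
    linarith [legendreIci_le hbdd hq, EReal.coe_nonneg.1 hnonneg]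
  exact ge_of_tendsto (((continuous_mul_const q).tendsto a).mono_left nhdsWithin_le_nhds)
    (eventually_nhdsWithin_of_forall hgt)

lemma setOf_eLegendre_ne_bot (hτ : IsLqSpec d τ) (hdom : {q : ℝ | τ q ≠ ⊥} = Ici 0)
    (ha : Tendsto (fun q : ℝ => (τ q).toReal / q) atTop (𝓝 a)) :
    {α : EReal | eLegendre τ α ≠ ⊥} = Ici (a : EReal) := by
  ext α
  induction α using EReal.rec with
  | bot => simp [eLegendre_bot hτ.at_one]
  | coe α =>
    change eLegendre τ α ≠ ⊥ ↔ (a : EReal) ≤ α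
    rw [EReal.coe_le_coe_iff]
    rcases lt_or_ge α a with hα | hα
    · rw [hτ.eLegendre_coe_eq_sInf hdom,
        EReal.sInf_image_coe_of_not_bddBelow (not_bddBelow_image_of_lt ha hα)]
      simpa using hα
    · rw [hτ.eLegendre_coe_of_bddBelow hdom
        (bddBelow_image_of_le_mul (fun q => hτ.toReal_le_mul hdom ha) hα)]
      simpa using hα
  | top => simp [eLegendre_top hdom, hτ.ne_top 0]

end IsLqSpec

end Spectrum

theorem statement6_general (d : ℕ) (τ : ℝ → EReal) (hτ : IsLqSpec d τ)
    (hdom : {q : ℝ | τ q ≠ ⊥} = Set.Ici 0)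
    (hcont : Filter.Tendsto τ (𝓝[>] (0:ℝ)) (𝓝 (τ 0)))
    (a : ℝ) (ha : Filter.Tendsto (fun q : ℝ => (τ q).toReal / q) atTop (𝓝 a))
    (B : EReal)
    (hB : Filter.Tendsto (fun q : ℝ => (τ q - τ 0) * (((q⁻¹ : ℝ)) : EReal))
      (𝓝[>] (0:ℝ)) (𝓝 B)) :
    eLegendre τ ⊤ = -τ 0 ∧
    {α : EReal | eLegendre τ α ≠ ⊥} = Set.Ici ((a : ℝ) : EReal) ∧
    (∀ α₁ α₂ t : ℝ, a ≤ α₁ → a ≤ α₂ → 0 ≤ t → t ≤ 1 →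
      ((t : ℝ) : EReal) * eLegendre τ ((α₁ : ℝ) : EReal) +
          (((1 - t : ℝ)) : EReal) * eLegendre τ ((α₂ : ℝ) : EReal) ≤
        eLegendre τ (((t * α₁ + (1 - t) * α₂ : ℝ)) : EReal)) ∧
    MonotoneOn (fun α : ℝ => eLegendre τ ((α : ℝ) : EReal)) (Set.Ici a) ∧
    ContinuousOn (fun α : ℝ => eLegendre τ ((α : ℝ) : EReal)) (Set.Ici a) ∧
    StrictMonoOn (fun α : ℝ => eLegendre τ ((α : ℝ) : EReal))
      {α : ℝ | a ≤ α ∧ ((α : ℝ) : EReal) < B} ∧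
    (B ≠ ⊤ → ∀ α : ℝ, B ≤ ((α : ℝ) : EReal) → eLegendre τ ((α : ℝ) : EReal) = -τ 0) ∧
    Filter.Tendsto (fun α : ℝ => eLegendre τ ((α : ℝ) : EReal)) atTop (𝓝 (-τ 0)) := by
  have hlin : ∀ q, 0 ≤ q → (τ q).toReal ≤ a * q := fun q => hτ.toReal_le_mul hdom ha
  have hF : ∀ α : ℝ, a ≤ α → eLegendre τ α = legendreIci (fun q => (τ q).toReal) α :=
    fun α hα => hτ.eLegendre_coe_of_bddBelow hdom (bddBelow_image_of_le_mul hlin hα)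
  have hB' := hτ.tendsto_slope_toReal hdom hB
  have hτ0 : (((τ 0).toReal : ℝ) : EReal) = τ 0 := hτ.coe_toReal hdom le_rfl
  refine ⟨eLegendre_top hdom, hτ.setOf_eLegendre_ne_bot hdom ha, ?_, ?_, ?_, ?_, ?_, ?_⟩
  · intro α₁ α₂ u h₁ h₂ hu₀ hu₁
    have hconc := (concaveOn_legendreIci hlin).2 h₁ h₂ hu₀ (sub_nonneg.2 hu₁) (add_sub_cancel u 1)
    simp only [smul_eq_mul] at hconc
    rw [hF α₁ h₁, hF α₂ h₂, hF _ (by nlinarith)]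
    exact_mod_cast hconc
  · intro α₁ h₁ α₂ h₂ h
    simpa only [hF α₁ h₁, hF α₂ h₂, EReal.coe_le_coe_iff] using monotoneOn_legendreIci hlin h₁ h₂ h
  · exact (continuous_coe_real_ereal.comp_continuousOn (continuousOn_legendreIci hlin)).congr
      fun α hα => hF α hα
  · intro α₁ h₁ α₂ h₂ h
    simpa only [hF α₁ h₁.1, hF α₂ h₂.1, EReal.coe_lt_coe_iff] using
      strictMonoOn_legendreIci hlin (hτ.continuousWithinAt_toReal hdom hcont) hB' h₁ h₂ h
  · intro _ α hBα
    have hleast := isLeast_image_of_slope_le fun q hq => EReal.coe_le_coe_iff.1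
      ((slope_le_of_tendsto (hτ.concaveOn_toReal hdom) hB' hq).trans hBα)
    rw [hτ.eLegendre_coe_of_bddBelow hdom hleast.bddBelow, legendreIci, hleast.csInf_eq,
      EReal.coe_neg, hτ0]
  · rw [← hτ0, ← EReal.coe_neg]
    have hlim := tendsto_legendreIci hlin (hτ.continuousWithinAt_toReal hdom hcont)
    exact (EReal.tendsto_coe.2 hlim).congr' ((eventually_ge_atTop a).mono fun α hα => (hF α hα).symm)

/-- Proposition 1.4(2)(b): structure of `τ*` when `dom τ = [0,∞)`,
`τ(0) < 0` and `τ` is continuous at `0⁺`. -/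
theorem statement6 (d : ℕ) (hd : 1 ≤ d) (τ : ℝ → EReal) (hτ : IsLqSpec d τ)
    (hdom : {q : ℝ | τ q ≠ ⊥} = Set.Ici 0) (h0 : τ 0 < 0)
    (hcont : Filter.Tendsto τ (𝓝[>] (0:ℝ)) (𝓝 (τ 0)))
    (a : ℝ) (ha : Filter.Tendsto (fun q : ℝ => (τ q).toReal / q) atTop (𝓝 a))
    (B : EReal) (hBpos : 0 < B)
    (hB : Filter.Tendsto (fun q : ℝ => (τ q - τ 0) * (((q⁻¹ : ℝ)) : EReal))
      (𝓝[>] (0:ℝ)) (𝓝 B)) :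
    eLegendre τ ⊤ = -τ 0 ∧
    {α : EReal | eLegendre τ α ≠ ⊥} = Set.Ici ((a : ℝ) : EReal) ∧
    (∀ α₁ α₂ t : ℝ, a ≤ α₁ → a ≤ α₂ → 0 ≤ t → t ≤ 1 →
      ((t : ℝ) : EReal) * eLegendre τ ((α₁ : ℝ) : EReal) +
          (((1 - t : ℝ)) : EReal) * eLegendre τ ((α₂ : ℝ) : EReal) ≤
        eLegendre τ (((t * α₁ + (1 - t) * α₂ : ℝ)) : EReal)) ∧
    MonotoneOn (fun α : ℝ => eLegendre τ ((α : ℝ) : EReal)) (Set.Ici a) ∧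
    ContinuousOn (fun α : ℝ => eLegendre τ ((α : ℝ) : EReal)) (Set.Ici a) ∧
    StrictMonoOn (fun α : ℝ => eLegendre τ ((α : ℝ) : EReal))
      {α : ℝ | a ≤ α ∧ ((α : ℝ) : EReal) < B} ∧
    (B ≠ ⊤ → ∀ α : ℝ, B ≤ ((α : ℝ) : EReal) → eLegendre τ ((α : ℝ) : EReal) = -τ 0) ∧
    Filter.Tendsto (fun α : ℝ => eLegendre τ ((α : ℝ) : EReal)) atTop (𝓝 (-τ 0)) :=
  statement6_general d τ hτ hdom hcont a ha B hB
end
end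

section
/- For every integer d ≥ 1, every μ ∈ M_c^+(ℝ^d), and all 0 ≤ α ≤ β ≤ ∞: dim_H E(μ,α,β) ≤ min( f̄^LD_μ(α), f̄^LD_μ(β), f̲^LD_μ(α,β) ), with the convention dim_H ∅ = −∞. -/
open MeasureTheory Metric Set Filter Topology
open scoped ENNReal NNReal

noncomputable section

/-!
For `x ∈ E(μ,α,β)` and `ε > 0`, the mass `μ(B(x,r))` lies in `[r^(β+ε), r^(α-ε)]` for all
small `r`, and in `[r^(γ+ε), r^(γ-ε)]` (`γ = α` or `γ = β`) for arbitrarily small `r`, which may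
be taken dyadic at the cost of a larger `ε`. A maximal `2r`-separated set of points whose window
holds at scale `r` is a centered packing of `supp μ`, so its size is bounded by the
large-deviations count, and the balls of radius `2r` around it cover those points. If the count is
at most `r^(-t)`, covering at scales `r_n ≤ 2^(-n)` costs `∑ (4 r_n)^s r_n^(-t) < ∞` for `s > t`,
and a Hausdorff–Cantelli argument gives `𝓗^s = 0`. For `f̲^LD(α,β)` one sequence of good scales
serves every point; for `f̄^LD(γ)` all small scales are good and each point uses its own dyadic
ones.
-/

lemma elog_mul_le_iff {m : ℝ≥0∞} {k : ℝ} (hk : 0 < k) (y : ℝ) :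
    elog m * (k : EReal) ≤ y ↔ m ≤ ENNReal.ofReal (Real.exp (y / k)) := by
  rcases eq_or_ne m 0 with rfl | h0
  · simp [elog, EReal.bot_mul_of_pos (EReal.coe_pos.2 hk)]
  rcases eq_or_ne m ⊤ with rfl | htop
  · simp [elog, EReal.top_mul_of_pos (EReal.coe_pos.2 hk)]
  rw [elog, if_neg h0, if_neg htop, ← EReal.coe_mul, EReal.coe_le_coe_iff, ← le_div_iff₀ hk,
    ENNReal.le_ofReal_iff_toReal_le htop (Real.exp_pos _).le,
    Real.log_le_iff_le_exp (ENNReal.toReal_pos h0 htop)]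

lemma le_elog_mul_iff {m : ℝ≥0∞} {k : ℝ} (hk : k < 0) (y : ℝ) :
    (y : EReal) ≤ elog m * (k : EReal) ↔ m ≤ ENNReal.ofReal (Real.exp (y / k)) := by
  rcases eq_or_ne m 0 with rfl | h0
  · simp [elog, EReal.bot_mul_of_neg (EReal.coe_neg'.2 hk)]
  rcases eq_or_ne m ⊤ with rfl | htop
  · simp [elog, EReal.top_mul_of_neg (EReal.coe_neg'.2 hk)]
  rw [elog, if_neg h0, if_neg htop, ← EReal.coe_mul, EReal.coe_le_coe_iff, ← le_div_iff_of_neg hk,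
    ENNReal.le_ofReal_iff_toReal_le htop (Real.exp_pos _).le,
    Real.log_le_iff_le_exp (ENNReal.toReal_pos h0 htop)]

section Scale

variable {m : ℝ≥0∞} {r : ℝ}

lemma exp_div_inv_log (hr : 0 < r) (c : ℝ) : Real.exp (c / (Real.log r)⁻¹) = r ^ c := by
  rw [div_inv_eq_mul, mul_comm, Real.rpow_def_of_pos hr]

lemma le_ofReal_rpow_of_lt_elog_mul (hr0 : 0 < r) (hr1 : r < 1) {c : ℝ}
    (h : (c : EReal) < elog m * ((Real.log r)⁻¹ : ℝ)) : m ≤ ENNReal.ofReal (r ^ c) := by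
  rw [← exp_div_inv_log hr0]
  exact (le_elog_mul_iff (inv_lt_zero.2 (Real.log_neg hr0 hr1)) c).1 h.le

lemma ofReal_rpow_le_of_elog_mul_lt (hr0 : 0 < r) (hr1 : r < 1) {c : ℝ}
    (h : elog m * ((Real.log r)⁻¹ : ℝ) < c) : ENNReal.ofReal (r ^ c) ≤ m := by
  rw [← exp_div_inv_log hr0]
  by_contra! hm
  exact h.not_ge ((le_elog_mul_iff (inv_lt_zero.2 (Real.log_neg hr0 hr1)) c).2 hm.le)

lemma le_ofReal_rpow_neg_of_elog_mul_lt (hr0 : 0 < r) (hr1 : r < 1) {t : ℝ}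
    (h : elog m * ((-Real.log r)⁻¹ : ℝ) < t) : m ≤ ENNReal.ofReal (r ^ (-t)) := by
  have hk : 0 < (-Real.log r)⁻¹ := inv_pos.2 (neg_pos.2 (Real.log_neg hr0 hr1))
  have hexp : Real.exp (t / (-Real.log r)⁻¹) = r ^ (-t) := by
    rw [div_inv_eq_mul, Real.rpow_def_of_pos hr0]
    ring_nf
  exact hexp ▸ (elog_mul_le_iff hk t).1 h.le

lemma eventually_le_ofReal_rpow_neg_of_limsup_lt {N : ℝ → ℝ≥0∞} {t : ℝ}
    (h : limsup (fun r => elog (N r) * (((-Real.log r)⁻¹ : ℝ) : EReal)) (𝓝[>] 0) < t) :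
    ∀ᶠ r in 𝓝[>] 0, N r ≤ ENNReal.ofReal (r ^ (-t)) := by
  filter_upwards [eventually_lt_of_limsup_lt h, Ioo_mem_nhdsGT one_pos] with r ht hr
  exact le_ofReal_rpow_neg_of_elog_mul_lt hr.1 hr.2 ht

lemma frequently_le_ofReal_rpow_neg_of_liminf_lt {N : ℝ → ℝ≥0∞} {t : ℝ}
    (h : liminf (fun r => elog (N r) * (((-Real.log r)⁻¹ : ℝ) : EReal)) (𝓝[>] 0) < t) :
    ∃ᶠ r in 𝓝[>] 0, N r ≤ ENNReal.ofReal (r ^ (-t)) :=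
  ((frequently_lt_of_liminf_lt (by isBoundedDefault) h).and_eventually
    (Ioo_mem_nhdsGT one_pos)).mono fun _ ⟨ht, hr⟩ => le_ofReal_rpow_neg_of_elog_mul_lt hr.1 hr.2 ht

end Scale

section LocalDimension

variable {d : ℕ} {μ : Measure (Euc d)} {x : Euc d} {c : ℝ}

lemma eventually_measure_closedBall_le_of_lt_dLow (h : (c : EReal) < dLow μ x) :
    ∀ᶠ r in 𝓝[>] 0, μ (closedBall x r) ≤ ENNReal.ofReal (r ^ c) := by
  filter_upwards [eventually_lt_of_lt_liminf h, Ioo_mem_nhdsGT one_pos] with r hc hr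
  exact le_ofReal_rpow_of_lt_elog_mul hr.1 hr.2 hc

lemma frequently_le_measure_closedBall_of_dLow_lt (h : dLow μ x < c) :
    ∃ᶠ r in 𝓝[>] 0, ENNReal.ofReal (r ^ c) ≤ μ (closedBall x r) :=
  ((frequently_lt_of_liminf_lt (by isBoundedDefault) h).and_eventually
    (Ioo_mem_nhdsGT one_pos)).mono fun _ ⟨hc, hr⟩ => ofReal_rpow_le_of_elog_mul_lt hr.1 hr.2 hc

lemma eventually_le_measure_closedBall_of_dUp_lt (h : dUp μ x < c) :
    ∀ᶠ r in 𝓝[>] 0, ENNReal.ofReal (r ^ c) ≤ μ (closedBall x r) := by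
  filter_upwards [eventually_lt_of_limsup_lt h, Ioo_mem_nhdsGT one_pos] with r hc hr
  exact ofReal_rpow_le_of_elog_mul_lt hr.1 hr.2 hc

lemma frequently_measure_closedBall_le_of_lt_dUp (h : (c : EReal) < dUp μ x) :
    ∃ᶠ r in 𝓝[>] 0, μ (closedBall x r) ≤ ENNReal.ofReal (r ^ c) :=
  ((frequently_lt_of_lt_limsup (by isBoundedDefault) h).and_eventually
    (Ioo_mem_nhdsGT one_pos)).mono fun _ ⟨hc, hr⟩ => le_ofReal_rpow_of_lt_elog_mul hr.1 hr.2 hc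

lemma monotone_measure_closedBall : Monotone fun r => μ (closedBall x r) :=
  fun _ _ h => measure_mono (closedBall_subset_closedBall h)

end LocalDimension

lemma eventually_forall_rpow_le_rpow {c' c : ℝ} (h : c' < c) :
    ∀ᶠ ρ in 𝓝[>] (0 : ℝ), ∀ r ∈ Icc (ρ / 2) (2 * ρ), r ^ c ≤ ρ ^ c' := by
  have hlog : ∀ᶠ ρ in 𝓝[>] (0 : ℝ), Real.log ρ ≤ -(|c| * Real.log 2) / (c - c') :=
    Real.tendsto_log_nhdsGT_zero.eventually (eventually_le_atBot _)
  filter_upwards [hlog, self_mem_nhdsWithin] with ρ hρ (hρ0 : 0 < ρ) r ⟨hr1, hr2⟩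
  have hr0 : 0 < r := by linarith
  have hu : |Real.log r - Real.log ρ| ≤ Real.log 2 := by
    rw [← Real.log_div hr0.ne' hρ0.ne', abs_le, ← Real.log_inv]
    refine ⟨Real.log_le_log (by norm_num) ?_, Real.log_le_log (by positivity) ?_⟩
    · rw [le_div_iff₀ hρ0]; linarith
    · rw [div_le_iff₀ hρ0]; linarith
  have hcu : c * (Real.log r - Real.log ρ) ≤ |c| * Real.log 2 :=
    (le_abs_self _).trans (abs_mul c _ ▸ mul_le_mul_of_nonneg_left hu (abs_nonneg c))
  have hρ' : Real.log ρ * (c - c') ≤ -(|c| * Real.log 2) := (le_div_iff₀ (sub_pos.2 h)).1 hρ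
  rw [Real.rpow_def_of_pos hr0, Real.rpow_def_of_pos hρ0, Real.exp_le_exp]
  linarith

abbrev dyadic (n : ℕ) : ℝ := (2 : ℝ)⁻¹ ^ n

lemma dyadic_pos (n : ℕ) : 0 < dyadic n := by positivity

lemma dyadic_succ (n : ℕ) : dyadic (n + 1) = dyadic n / 2 := by
  rw [dyadic, pow_succ, div_eq_mul_inv]

lemma dyadic_anti {m n : ℕ} (h : m ≤ n) : dyadic n ≤ dyadic m :=
  pow_le_pow_of_le_one (by norm_num) (by norm_num) h

lemma dyadic_rpow (n : ℕ) (e : ℝ) : dyadic n ^ e = ((2 : ℝ)⁻¹ ^ e) ^ n := by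
  rw [dyadic, ← Real.rpow_natCast_mul (by norm_num), mul_comm, Real.rpow_mul_natCast (by norm_num)]

lemma tendsto_dyadic : Tendsto dyadic atTop (𝓝[>] 0) :=
  tendsto_nhdsWithin_iff.2 ⟨tendsto_pow_atTop_nhds_zero_of_lt_one (by norm_num) (by norm_num),
    Eventually.of_forall dyadic_pos⟩

lemma frequently_atTop_of_frequently_nhdsGT_dyadic {P : ℝ → Prop} {Q : ℕ → Prop}
    (hP : ∃ᶠ r in 𝓝[>] 0, P r)
    (hPQ : ∀ᶠ n in atTop, ∀ r ∈ Ioc (dyadic (n + 1)) (dyadic n), P r → Q n) :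
    ∃ᶠ n in atTop, Q n := by
  rw [frequently_atTop]
  intro N
  obtain ⟨N', hN'⟩ := eventually_atTop.1 hPQ
  obtain ⟨r, hr, hr0, hrN⟩ :=
    (hP.and_eventually (Ioo_mem_nhdsGT (dyadic_pos (max N N')))).exists
  obtain ⟨n, hn1, hn2⟩ := exists_nat_pow_near_of_lt_one hr0
    (hrN.le.trans (pow_le_one₀ (by norm_num) (by norm_num))) (by norm_num : (0 : ℝ) < 2⁻¹)
    (by norm_num)
  have hn : max N N' ≤ n := by
    by_contra! hlt
    exact (hn1.trans hrN).not_ge (dyadic_anti hlt)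
  exact ⟨n, le_of_max_le_left hn, hN' n (le_of_max_le_right hn) r ⟨hn1, hn2⟩ hr⟩

lemma mem_Icc_of_mem_Ioc_dyadic {n : ℕ} {r : ℝ} (hr : r ∈ Ioc (dyadic (n + 1)) (dyadic n)) :
    r ∈ Icc (dyadic n / 2) (2 * dyadic n) ∧ r ∈ Icc (dyadic (n + 1) / 2) (2 * dyadic (n + 1)) := by
  have := dyadic_pos n
  rw [dyadic_succ] at hr ⊢
  exact ⟨⟨hr.1.le, by linarith [hr.2]⟩, ⟨by linarith [hr.1], by linarith [hr.2]⟩⟩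

section Monotone

variable {f : ℝ → ℝ≥0∞} {c c' : ℝ}

lemma frequently_ofReal_dyadic_rpow_le (hf : Monotone f) (hcc' : c < c')
    (h : ∃ᶠ r in 𝓝[>] 0, ENNReal.ofReal (r ^ c) ≤ f r) :
    ∃ᶠ n in atTop, ENNReal.ofReal (dyadic n ^ c') ≤ f (dyadic n) := by
  refine frequently_atTop_of_frequently_nhdsGT_dyadic h ?_
  filter_upwards [tendsto_dyadic.eventually (eventually_forall_rpow_le_rpow (neg_lt_neg hcc'))]
    with n hn r hr hfr
  have hr0 : 0 < r := (dyadic_pos _).trans hr.1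
  have hrpow : dyadic n ^ c' ≤ r ^ c := by
    have := hn r (mem_Icc_of_mem_Ioc_dyadic hr).1
    rwa [Real.rpow_neg hr0.le, Real.rpow_neg (dyadic_pos n).le,
      inv_le_inv₀ (Real.rpow_pos_of_pos hr0 _) (Real.rpow_pos_of_pos (dyadic_pos n) _)] at this
  exact (ENNReal.ofReal_le_ofReal hrpow).trans (hfr.trans (hf hr.2))

lemma frequently_le_ofReal_dyadic_rpow (hf : Monotone f) (hc'c : c' < c)
    (h : ∃ᶠ r in 𝓝[>] 0, f r ≤ ENNReal.ofReal (r ^ c)) :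
    ∃ᶠ n in atTop, f (dyadic n) ≤ ENNReal.ofReal (dyadic n ^ c') := by
  refine (tendsto_add_atTop_nat 1).frequently (frequently_atTop_of_frequently_nhdsGT_dyadic h ?_)
  filter_upwards [(tendsto_dyadic.comp (tendsto_add_atTop_nat 1)).eventually
    (eventually_forall_rpow_le_rpow hc'c)] with n hn r hr hfr
  exact (hf hr.1.le).trans (hfr.trans (ENNReal.ofReal_le_ofReal
    (hn r (mem_Icc_of_mem_Ioc_dyadic hr).2)))

end Monotone

lemma dimHE_mono {X : Type*} [EMetricSpace X] {s t : Set X} (h : s ⊆ t) : dimHE s ≤ dimHE t := by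
  rcases s.eq_empty_or_nonempty with rfl | hs
  · simp [dimHE]
  rw [dimHE, dimHE, if_neg hs.ne_empty, if_neg (hs.mono h).ne_empty]
  exact EReal.coe_ennreal_le_coe_ennreal_iff.2 (dimH_mono h)

section HausdorffMeasure

variable {X : Type*} [EMetricSpace X] [MeasurableSpace X] [BorelSpace X]

theorem hausdorffMeasure_limsup_eq_zero {ι : ℕ → Type*} [∀ n, Countable (ι n)] {s : ℝ}
    {S : ℕ → Set X} (U : ∀ n, ι n → Set X) (hS : ∀ n, S n ⊆ ⋃ i, U n i) {δ : ℕ → ℝ≥0∞}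
    (hδ : Tendsto δ atTop (𝓝 0)) (hdiam : ∀ n i, ediam (U n i) ≤ δ n)
    (hsum : ∑' n, ∑' i, ediam (U n i) ^ s ≠ ∞) :
    μH[s] (limsup S atTop) = 0 := by
  have hcover : ∀ N, limsup S atTop ⊆ ⋃ k : Σ j, ι (j + N), U (k.1 + N) k.2 := by
    intro N x hx
    obtain ⟨n, hn, hxn⟩ := frequently_atTop.1 (mem_limsup_iff_frequently_mem.1 hx) N
    obtain ⟨i, hi⟩ := mem_iUnion.1 (hS n hxn)
    obtain ⟨j, rfl⟩ := Nat.exists_eq_add_of_le' hn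
    exact mem_iUnion.2 ⟨⟨j, i⟩, hi⟩
  have htail : Tendsto (fun N => ⨆ j, δ (j + N)) atTop (𝓝 0) := by
    rw [ENNReal.tendsto_atTop_zero] at hδ ⊢
    intro ε hε
    obtain ⟨N, hN⟩ := hδ ε hε
    exact ⟨N, fun n hn => iSup_le fun j => hN _ (by omega)⟩
  refine nonpos_iff_eq_zero.1 ?_
  calc μH[s] (limsup S atTop)
      ≤ liminf (fun N => ∑' k : Σ j, ι (j + N), ediam (U (k.1 + N) k.2) ^ s) atTop :=
        Measure.hausdorffMeasure_le_liminf_tsum s _ _ htail _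
          (Eventually.of_forall fun N k => (hdiam _ _).trans (le_iSup (fun j => δ (j + N)) k.1))
          (Eventually.of_forall hcover)
    _ = liminf (fun N => ∑' j, ∑' i, ediam (U (j + N) i) ^ s) atTop := by
        simp only [ENNReal.tsum_sigma']
    _ = 0 := (ENNReal.tendsto_sum_nat_add _ hsum).liminf_eq

lemma dimHE_le_of_hausdorffMeasure_eq_zero {E : Set X} {F : EReal}
    (h : ∀ t s : ℝ, F < t → t < s → 0 ≤ s → μH[s] E = 0) : dimHE E ≤ F := by
  rcases E.eq_empty_or_nonempty with rfl | ⟨x, hx⟩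
  · simp [dimHE]
  rw [dimHE, if_neg (nonempty_iff_ne_empty.1 ⟨x, hx⟩)]
  by_contra! hlt
  have hF : 0 ≤ F := by
    by_contra! hF
    obtain ⟨t, hFt, ht⟩ := EReal.exists_between_coe_real hF
    have := measure_mono_null (singleton_subset_iff.2 hx)
      (h t 0 hFt (by exact_mod_cast ht) le_rfl)
    simp [Measure.hausdorffMeasure_zero_singleton] at this
  obtain ⟨s, hFs, hsE⟩ := EReal.exists_between_coe_real hlt
  obtain ⟨t, hFt, hts⟩ := EReal.exists_between_coe_real hFs
  have hs : 0 ≤ s := by exact_mod_cast hF.trans hFs.le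
  have hdim : dimH E ≤ ENNReal.ofReal s := dimH_le_of_hausdorffMeasure_ne_top (by
    rw [Real.coe_toNNReal s hs, h t s hFt (by exact_mod_cast hts) hs]
    exact ENNReal.zero_ne_top)
  rw [← EReal.coe_ennreal_le_coe_ennreal_iff, EReal.coe_ennreal_ofReal, max_eq_left hs] at hdim
  exact hsE.not_ge hdim

end HausdorffMeasure

lemma ediam_closedBall_le_ofReal {X : Type*} [PseudoMetricSpace X] (x : X) {ρ : ℝ} (hρ : 0 ≤ ρ) :
    ediam (closedBall x ρ) ≤ ENNReal.ofReal (2 * ρ) := by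
  rw [← Metric.closedEBall_ofReal hρ, ENNReal.ofReal_mul zero_le_two, ENNReal.ofReal_ofNat]
  exact Metric.ediam_closedEBall_le

lemma tsum_ediam_closedBall_rpow_le {X : Type*} [PseudoMetricSpace X] {P : Set X} {ρ s t : ℝ}
    (hρ : 0 < ρ) (hs : 0 ≤ s) (hP : (P.encard : ℝ≥0∞) ≤ ENNReal.ofReal (ρ ^ (-t))) :
    ∑' p : P, ediam (closedBall (p : X) (2 * ρ)) ^ s ≤ ENNReal.ofReal (4 ^ s * ρ ^ (s - t)) := by
  have hdiam (p : X) : ediam (closedBall p (2 * ρ)) ^ s ≤ ENNReal.ofReal ((4 * ρ) ^ s) := by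
    rw [← ENNReal.ofReal_rpow_of_nonneg (by positivity) hs, show 4 * ρ = 2 * (2 * ρ) by ring]
    gcongr
    exact ediam_closedBall_le_ofReal p (by positivity)
  calc ∑' p : P, ediam (closedBall (p : X) (2 * ρ)) ^ s
      ≤ ∑' _ : P, ENNReal.ofReal ((4 * ρ) ^ s) := ENNReal.tsum_le_tsum fun p => hdiam p
    _ = P.encard * ENNReal.ofReal ((4 * ρ) ^ s) := ENNReal.tsum_set_const _ _
    _ ≤ ENNReal.ofReal (ρ ^ (-t)) * ENNReal.ofReal ((4 * ρ) ^ s) := by gcongr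
    _ = ENNReal.ofReal (4 ^ s * ρ ^ (s - t)) := by
        rw [← ENNReal.ofReal_mul (by positivity), Real.mul_rpow (by norm_num) hρ.le,
          sub_eq_neg_add, Real.rpow_add hρ]
        ring_nf

section Packing

variable {d : ℕ} {μ : Measure (Euc d)} {S : Set (Euc d)} {lo hi : ℝ≥0∞} {r : ℝ}

lemma packingNumber_le_ldCount (hS : S ⊆ msupp μ)
    (hw : ∀ x ∈ S, lo ≤ μ (closedBall x r) ∧ μ (closedBall x r) ≤ hi) :
    (packingNumber (2 * r).toNNReal S : ℝ≥0∞) ≤ ldCount μ lo hi r := by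
  simp only [packingNumber, ENat.toENNReal_iSup]
  refine iSup₂_le fun C hCS => iSup_le fun hC => ?_
  have hdisj : C.PairwiseDisjoint fun x => closedBall x r := fun x hx y hy hxy => by
    have hsep : ENNReal.ofReal (2 * r) < edist x y := hC hx hy hxy
    rw [edist_dist, ENNReal.ofReal_lt_ofReal_iff'] at hsep
    exact closedBall_disjoint_closedBall (by linarith [hsep.1])
  have hC' : {x ∈ C | lo ≤ μ (closedBall x r) ∧ μ (closedBall x r) ≤ hi} = C :=
    sep_eq_self_iff_mem_true.2 fun x hx => hw x (hCS hx)
  exact le_iSup₂_of_le C ⟨hCS.trans hS, hdisj⟩ (by rw [hC'])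

lemma exists_cover_of_ldCount_le (hS : S ⊆ msupp μ)
    (hw : ∀ x ∈ S, lo ≤ μ (closedBall x r) ∧ μ (closedBall x r) ≤ hi) (hr : 0 ≤ r)
    {N : ℝ≥0∞} (hN : ldCount μ lo hi r ≤ N) (hNtop : N ≠ ⊤) :
    ∃ P : Set (Euc d), (P.encard : ℝ≥0∞) ≤ N ∧ S ⊆ ⋃ p ∈ P, closedBall p (2 * r) := by
  have hpack := (packingNumber_le_ldCount hS hw).trans hN
  have hne : packingNumber (2 * r).toNNReal S ≠ ⊤ := by
    rintro h
    exact hNtop (top_unique (by simpa [h] using hpack))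
  refine ⟨maximalSeparatedSet (2 * r).toNNReal S, by rwa [encard_maximalSeparatedSet hne], ?_⟩
  have := isCover_iff_subset_iUnion_closedBall.1 (isCover_maximalSeparatedSet hne)
  rwa [Real.coe_toNNReal _ (by positivity)] at this

end Packing

section Covering

variable {d : ℕ} {μ : Measure (Euc d)} {s t : ℝ} {lo hi : ℝ → ℝ≥0∞}

theorem hausdorffMeasure_limsup_eq_zero_of_ldCount_le (hs : 0 ≤ s) (hts : t < s)
    {r : ℕ → ℝ} (hr0 : ∀ n, 0 < r n) (hr : ∀ n, r n ≤ dyadic n) {S : ℕ → Set (Euc d)}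
    (hS : ∀ n, S n ⊆ msupp μ)
    (hw : ∀ n, ∀ x ∈ S n, lo (r n) ≤ μ (closedBall x (r n)) ∧ μ (closedBall x (r n)) ≤ hi (r n))
    (hcount : ∀ n, ldCount μ (lo (r n)) (hi (r n)) (r n) ≤ ENNReal.ofReal (r n ^ (-t))) :
    μH[s] (limsup S atTop) = 0 := by
  choose P hP hcov using fun n =>
    exists_cover_of_ldCount_le (hS n) (hw n) (hr0 n).le (hcount n) ENNReal.ofReal_ne_top
  have hfin (n : ℕ) : (P n).Finite := by
    refine encard_ne_top_iff.1 fun h => ?_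
    simpa [h] using hP n
  have (n : ℕ) : Countable (P n) := (hfin n).countable.to_subtype
  have hq : (2 : ℝ)⁻¹ ^ (s - t) < 1 := Real.rpow_lt_one (by norm_num) (by norm_num) (sub_pos.2 hts)
  refine hausdorffMeasure_limsup_eq_zero (fun n (p : P n) => closedBall (p : Euc d) (2 * r n))
    (fun n => by simpa only [iUnion_coe_set] using hcov n)
    (δ := fun n => ENNReal.ofReal (4 * dyadic n)) ?_ ?_ ?_
  · simpa using ENNReal.tendsto_ofReal
      ((tendsto_pow_atTop_nhds_zero_of_lt_one (r := (2 : ℝ)⁻¹) (by norm_num)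
        (by norm_num)).const_mul 4)
  · intro n p
    refine (ediam_closedBall_le_ofReal _ (by linarith [hr0 n])).trans (ENNReal.ofReal_le_ofReal ?_)
    linarith [hr n]
  · refine ne_top_of_le_ne_top (b := ∑' n, ENNReal.ofReal (4 ^ s * ((2 : ℝ)⁻¹ ^ (s - t)) ^ n)) ?_
      (ENNReal.tsum_le_tsum fun n => ?_)
    · rw [← ENNReal.ofReal_tsum_of_nonneg (fun n => by positivity)
        ((summable_geometric_of_lt_one (Real.rpow_nonneg (by norm_num) _) hq).mul_left _)]
      exact ENNReal.ofReal_ne_top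
    · refine (tsum_ediam_closedBall_rpow_le (hr0 n) hs (hP n)).trans (ENNReal.ofReal_le_ofReal ?_)
      rw [← dyadic_rpow]
      gcongr
      exacts [(hr0 n).le, hr n]

theorem hausdorffMeasure_eq_zero_of_eventually_window (hs : 0 ≤ s) (hts : t < s)
    {E : Set (Euc d)} (hE : E ⊆ msupp μ)
    (hw : ∀ x ∈ E, ∀ᶠ r in 𝓝[>] 0, lo r ≤ μ (closedBall x r) ∧ μ (closedBall x r) ≤ hi r)
    (hcount : ∃ᶠ r in 𝓝[>] 0, ldCount μ (lo r) (hi r) r ≤ ENNReal.ofReal (r ^ (-t))) :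
    μH[s] E = 0 := by
  set F : ℕ → Set (Euc d) := fun m =>
    {x ∈ E | ∀ r ∈ Ioo 0 (dyadic m), lo r ≤ μ (closedBall x r) ∧ μ (closedBall x r) ≤ hi r}
  have hEF : E ⊆ ⋃ m, F m := by
    intro x hx
    obtain ⟨ε, hε, hεw⟩ := mem_nhdsGT_iff_exists_Ioo_subset.1 (hw x hx)
    obtain ⟨m, hm⟩ := exists_pow_lt_of_lt_one hε (by norm_num : (2 : ℝ)⁻¹ < 1)
    exact mem_iUnion.2 ⟨m, hx, fun r hr => hεw ⟨hr.1, hr.2.trans hm⟩⟩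
  refine measure_mono_null hEF (measure_iUnion_null fun m => ?_)
  choose r hrcount hr using fun k =>
    (hcount.and_eventually (Ioo_mem_nhdsGT (dyadic_pos (k + m)))).exists
  simpa only [limsup_const] using hausdorffMeasure_limsup_eq_zero_of_ldCount_le hs hts
    (fun k => (hr k).1) (fun k => (hr k).2.le.trans (dyadic_anti (by omega))) (S := fun _ => F m)
    (fun _ _ hx => hE hx.1) (fun k _ hx => hx.2 (r k) ⟨(hr k).1,
      (hr k).2.trans_le (dyadic_anti (by omega))⟩) hrcount

theorem hausdorffMeasure_eq_zero_of_frequently_dyadic_window (hs : 0 ≤ s) (hts : t < s)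
    {E : Set (Euc d)} (hE : E ⊆ msupp μ)
    (hw : ∀ x ∈ E, ∃ᶠ n in atTop,
      lo (dyadic n) ≤ μ (closedBall x (dyadic n)) ∧ μ (closedBall x (dyadic n)) ≤ hi (dyadic n))
    (hcount : ∀ᶠ r in 𝓝[>] 0, ldCount μ (lo r) (hi r) r ≤ ENNReal.ofReal (r ^ (-t))) :
    μH[s] E = 0 := by
  set S : ℕ → Set (Euc d) := fun n =>
    {x ∈ E | lo (dyadic n) ≤ μ (closedBall x (dyadic n)) ∧
      μ (closedBall x (dyadic n)) ≤ hi (dyadic n)}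
  have hES : E ⊆ limsup S atTop := fun x hx =>
    mem_limsup_iff_frequently_mem.2 ((hw x hx).mono fun _ hn => ⟨hx, hn⟩)
  obtain ⟨N, hN⟩ := eventually_atTop.1 (tendsto_dyadic.eventually hcount)
  refine measure_mono_null hES ?_
  rw [← limsup_nat_add S N]
  exact hausdorffMeasure_limsup_eq_zero_of_ldCount_le hs hts (fun n => dyadic_pos _)
    (fun n => dyadic_anti (by omega)) (fun n _ hx => hE hx.1) (fun n _ hx => hx.2)
    (fun n => hN _ (by omega))

end Covering

lemma rpowE_coe (r c : ℝ) : rpowE r c = ENNReal.ofReal (r ^ c) := by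
  simp [rpowE]

section Spectra

variable {d : ℕ} {μ : Measure (Euc d)} {E : Set (Euc d)}

lemma dimHE_le_fLDup_coe (hE : E ⊆ msupp μ) {a : ℝ}
    (hw : ∀ x ∈ E, ∀ ε : ℝ, 0 < ε → ∃ᶠ n in atTop,
      ENNReal.ofReal (dyadic n ^ (a + ε)) ≤ μ (closedBall x (dyadic n)) ∧
        μ (closedBall x (dyadic n)) ≤ ENNReal.ofReal (dyadic n ^ (a - ε))) :
    dimHE E ≤ fLDup μ a := by
  rw [fLDup, if_neg (EReal.coe_ne_top a)]
  refine dimHE_le_of_hausdorffMeasure_eq_zero fun t s hF hts hs => ?_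
  obtain ⟨ε, hF⟩ := iInf_lt_iff.1 hF
  obtain ⟨hε, hF⟩ := iInf_lt_iff.1 hF
  refine hausdorffMeasure_eq_zero_of_frequently_dyadic_window hs hts hE
    (lo := fun r => rpowE r (a + ε)) (hi := fun r => rpowE r (a - ε)) (fun x hx => ?_)
    (eventually_le_ofReal_rpow_neg_of_limsup_lt hF)
  simpa only [← EReal.coe_add, ← EReal.coe_sub, rpowE_coe] using hw x hx ε hε

lemma dimHE_le_fLDup_top (hE : E ⊆ msupp μ)
    (hw : ∀ x ∈ E, ∀ A : ℝ, ∃ᶠ n in atTop,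
      μ (closedBall x (dyadic n)) ≤ ENNReal.ofReal (dyadic n ^ A)) :
    dimHE E ≤ fLDup μ ⊤ := by
  rw [fLDup, if_pos rfl]
  refine dimHE_le_of_hausdorffMeasure_eq_zero fun t s hF hts hs => ?_
  obtain ⟨A, hF⟩ := iInf_lt_iff.1 hF
  exact hausdorffMeasure_eq_zero_of_frequently_dyadic_window hs hts hE
    (lo := fun _ => 0) (hi := fun r => ENNReal.ofReal (r ^ A))
    (fun x hx => (hw x hx A).mono fun _ h => ⟨zero_le, h⟩)
    (eventually_le_ofReal_rpow_neg_of_limsup_lt hF)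

lemma dimHE_le_fLDlowAB_coe (hE : E ⊆ msupp μ) {a : ℝ} {β : EReal}
    (hw : ∀ x ∈ E, ∀ ε : ℝ, 0 < ε → ∀ᶠ r in 𝓝[>] 0,
      rpowE r (β + ε) ≤ μ (closedBall x r) ∧ μ (closedBall x r) ≤ ENNReal.ofReal (r ^ (a - ε))) :
    dimHE E ≤ fLDlowAB μ a β := by
  rw [fLDlowAB, if_neg (EReal.coe_ne_top a)]
  refine dimHE_le_of_hausdorffMeasure_eq_zero fun t s hF hts hs => ?_
  obtain ⟨ε, hF⟩ := iInf_lt_iff.1 hF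
  obtain ⟨hε, hF⟩ := iInf_lt_iff.1 hF
  refine hausdorffMeasure_eq_zero_of_eventually_window hs hts hE
    (lo := fun r => rpowE r (β + ε)) (hi := fun r => rpowE r (a - ε)) (fun x hx => ?_)
    (frequently_le_ofReal_rpow_neg_of_liminf_lt hF)
  simpa only [← EReal.coe_sub, rpowE_coe] using hw x hx ε hε

lemma dimHE_le_fLDlowAB_top (hE : E ⊆ msupp μ) {β : EReal}
    (hw : ∀ x ∈ E, ∀ A : ℝ, ∀ᶠ r in 𝓝[>] 0, μ (closedBall x r) ≤ ENNReal.ofReal (r ^ A)) :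
    dimHE E ≤ fLDlowAB μ ⊤ β := by
  rw [fLDlowAB, if_pos rfl]
  refine dimHE_le_of_hausdorffMeasure_eq_zero fun t s hF hts hs => ?_
  obtain ⟨A, hF⟩ := iInf_lt_iff.1 hF
  exact hausdorffMeasure_eq_zero_of_eventually_window hs hts hE
    (lo := fun _ => 0) (hi := fun r => ENNReal.ofReal (r ^ A))
    (fun x hx => (hw x hx A).mono fun _ h => ⟨zero_le, h⟩)
    (frequently_le_ofReal_rpow_neg_of_liminf_lt hF)

end Spectra

section LevelSets

variable {d : ℕ} {μ : Measure (Euc d)}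

theorem dimHE_Elow_le_fLDup {γ : EReal} (hγ : γ ≠ ⊥) : dimHE (Elow μ γ) ≤ fLDup μ γ := by
  induction γ using EReal.rec with
  | bot => exact absurd rfl hγ
  | top =>
    exact dimHE_le_fLDup_top (fun x hx => hx.1) fun x hx A => (tendsto_dyadic.eventually
      (eventually_measure_closedBall_le_of_lt_dLow (hx.2 ▸ EReal.coe_lt_top A))).frequently
  | coe a =>
    refine dimHE_le_fLDup_coe (fun x hx => hx.1) fun x hx ε hε => ?_
    have hlow := frequently_le_measure_closedBall_of_dLow_lt (c := a + ε / 2)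
      (by rw [hx.2]; exact_mod_cast (by linarith : a < a + ε / 2))
    have hup := eventually_measure_closedBall_le_of_lt_dLow (c := a - ε)
      (by rw [hx.2]; exact_mod_cast (by linarith : a - ε < a))
    exact (frequently_ofReal_dyadic_rpow_le monotone_measure_closedBall (by linarith)
      hlow).and_eventually (tendsto_dyadic.eventually hup)

theorem dimHE_Eup_le_fLDup {γ : EReal} (hγ : γ ≠ ⊥) : dimHE (Eup μ γ) ≤ fLDup μ γ := by
  induction γ using EReal.rec with
  | bot => exact absurd rfl hγ
  | top =>
    exact dimHE_le_fLDup_top (fun x hx => hx.1) fun x hx A =>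
      frequently_le_ofReal_dyadic_rpow monotone_measure_closedBall (lt_add_one A)
        (frequently_measure_closedBall_le_of_lt_dUp (hx.2 ▸ EReal.coe_lt_top _))
  | coe b =>
    refine dimHE_le_fLDup_coe (fun x hx => hx.1) fun x hx ε hε => ?_
    have hup := frequently_measure_closedBall_le_of_lt_dUp (c := b - ε / 2)
      (by rw [hx.2]; exact_mod_cast (by linarith : b - ε / 2 < b))
    have hlow := eventually_le_measure_closedBall_of_dUp_lt (c := b + ε)
      (by rw [hx.2]; exact_mod_cast (by linarith : b < b + ε))
    exact ((frequently_le_ofReal_dyadic_rpow monotone_measure_closedBall (by linarith)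
      hup).and_eventually (tendsto_dyadic.eventually hlow)).mono fun _ h => ⟨h.2, h.1⟩

lemma eventually_rpowE_add_le_measure_closedBall {x : Euc d} {β : EReal} (hx : dUp μ x = β)
    (hβ : β ≠ ⊥) {ε : ℝ} (hε : 0 < ε) :
    ∀ᶠ r in 𝓝[>] 0, rpowE r (β + ε) ≤ μ (closedBall x r) := by
  induction β using EReal.rec with
  | bot => exact absurd rfl hβ
  | top => exact Eventually.of_forall fun r => by simp [rpowE]
  | coe b =>
    rw [← EReal.coe_add]
    simpa only [rpowE_coe] using eventually_le_measure_closedBall_of_dUp_lt (c := b + ε)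
      (by rw [hx]; exact_mod_cast (by linarith : b < b + ε))

theorem dimHE_Eab_le_fLDlowAB {α β : EReal} (hα : α ≠ ⊥) (hβ : β ≠ ⊥) :
    dimHE (Eab μ α β) ≤ fLDlowAB μ α β := by
  induction α using EReal.rec with
  | bot => exact absurd rfl hα
  | top =>
    exact dimHE_le_fLDlowAB_top (fun x hx => hx.1) fun x hx A =>
      eventually_measure_closedBall_le_of_lt_dLow (hx.2.1 ▸ EReal.coe_lt_top A)
  | coe a =>
    refine dimHE_le_fLDlowAB_coe (fun x hx => hx.1) fun x hx ε hε =>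
      (eventually_rpowE_add_le_measure_closedBall hx.2.2 hβ hε).and ?_
    exact eventually_measure_closedBall_le_of_lt_dLow
      (by rw [hx.2.1]; exact_mod_cast (by linarith : a - ε < a))

end LevelSets

theorem statement11_general (d : ℕ) (μ : Measure (Euc d))
    (α β : EReal) (h0 : 0 ≤ α) (hab : α ≤ β) :
    dimHE (Eab μ α β) ≤ min (min (fLDup μ α) (fLDup μ β)) (fLDlowAB μ α β) := by
  have hα : α ≠ ⊥ := ne_bot_of_le_ne_bot EReal.zero_ne_bot h0
  have hβ : β ≠ ⊥ := ne_bot_of_le_ne_bot hα hab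
  refine le_min (le_min ?_ ?_) (dimHE_Eab_le_fLDlowAB hα hβ)
  · exact (dimHE_mono fun _ hx => (⟨hx.1, hx.2.1⟩ : _ ∈ Elow μ α)).trans (dimHE_Elow_le_fLDup hα)
  · exact (dimHE_mono fun _ hx => (⟨hx.1, hx.2.2⟩ : _ ∈ Eup μ β)).trans (dimHE_Eup_le_fLDup hβ)

/-- Proposition 1.8(1), Hausdorff part: general upper bound for
`dim_H E(μ,α,β)` in terms of large-deviations spectra. -/
theorem statement11 (d : ℕ) (hd : 1 ≤ d) (μ : Measure (Euc d)) (hμ : McPlus μ)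
    (α β : EReal) (h0 : 0 ≤ α) (hab : α ≤ β) :
    dimHE (Eab μ α β) ≤ min (min (fLDup μ α) (fLDup μ β)) (fLDlowAB μ α β) :=
  statement11_general d μ α β h0 hab

end
end
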